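/- arXiv:2512.16759 — 7 statements merged into one kernel-verified Lean document; each statement's English description precedes it below -/
import Mathlib

section
/- Let E be a nonnegative random variable on a probability space, G a sub-σ-field, and f : (0,∞) → ℝ a concave function extended to [0,∞] by limits. If E[f(X)] is well-defined (i.e., min(E[f(X)⁺], E[f(X)⁻]) < ∞), then E[f(X) | G] ≤ f(E[X | G]) almost surely, where conditional expectations of nonintegrable nonnegative variables are defined via positive and negative parts. -/
open MeasureTheory ENNReal Filter Set
open scoped Classical
noncomputable section

/-- The positive part of an extended real, as an extended nonnegative real. -/
def erealPos (a : EReal) : ℝ≥0∞ := if a = ⊤ then ⊤ else ENNReal.ofReal a.toReal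

/-- Generalized expectation `E[f] = E[f⁺] - E[f⁻]`, valued in the extended reals. -/
def eexp {Ω : Type*} {mΩ : MeasurableSpace Ω} (μ : Measure Ω) (f : Ω → EReal) : EReal :=
  ((∫⁻ ω, erealPos (f ω) ∂μ : ℝ≥0∞) : EReal) - ((∫⁻ ω, erealPos (-(f ω)) ∂μ : ℝ≥0∞) : EReal)

/-- The expectation of an extended-real random variable is (well-)defined when at least one of
the expectations of its positive and negative parts is finite. -/
def ExpDefined {Ω : Type*} {mΩ : MeasurableSpace Ω} (μ : Measure Ω) (f : Ω → EReal) : Prop :=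
  (∫⁻ ω, erealPos (f ω) ∂μ) < ⊤ ∨ (∫⁻ ω, erealPos (-(f ω)) ∂μ) < ⊤

/-- Logarithm on `[0,∞]`, with `log 0 = -∞` and `log ∞ = ∞`. -/
def elog (x : ℝ≥0∞) : EReal := if x = 0 then ⊥ else if x = ⊤ then ⊤ else ((Real.log x.toReal : ℝ) : EReal)

/-- Ratio on `[0,∞]` with the conventions `0/0 = 0` and `∞/∞ = 1`. -/
def eratio (a b : ℝ≥0∞) : ℝ≥0∞ := if a = ⊤ ∧ b = ⊤ then 1 else a / b

/-- `g` is a version of the conditional expectation of the nonnegative `h` given the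
sub-σ-field `m`, under the measure `μ`. -/
def IsCondExpNN {Ω : Type*} {mΩ : MeasurableSpace Ω} (m : MeasurableSpace Ω)
    (μ : @Measure Ω mΩ) (h g : Ω → ℝ≥0∞) : Prop :=
  Measurable[m] g ∧ ∀ A : Set Ω, MeasurableSet[m] A → ∫⁻ ω in A, g ω ∂μ = ∫⁻ ω in A, h ω ∂μ

/-- `g` is a universal (θ-free) version of the conditional expectation of `h` given `m`,
simultaneously under all measures `P θ`, `θ` ranging over a set `T` of parameters. -/
def IsUnivCondExpNN {Ω Θ : Type*} {mΩ : MeasurableSpace Ω} (m : MeasurableSpace Ω)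
    (P : Θ → @Measure Ω mΩ) (T : Set Θ) (h g : Ω → ℝ≥0∞) : Prop :=
  Measurable[m] g ∧ ∀ θ ∈ T, IsCondExpNN m (P θ) h g

/-- A sub-σ-field `m` is sufficient for the family `P` over the parameter set `T`:
every nonnegative measurable function admits a universal conditional expectation given `m`. -/
def IsSufficient {Ω Θ : Type*} {mΩ : MeasurableSpace Ω} (m : MeasurableSpace Ω)
    (P : Θ → @Measure Ω mΩ) (T : Set Θ) : Prop :=
  m ≤ mΩ ∧ ∀ h : Ω → ℝ≥0∞, Measurable[mΩ] h → ∃ g, IsUnivCondExpNN m P T h g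

/-- Kullback–Leibler divergence, valued in `[0,∞]` (as an extended real):
`∫ log(dμ/dν) dμ` when `μ ≪ ν`, and `+∞` otherwise. -/
def klDiv' {Ω : Type*} {mΩ : MeasurableSpace Ω} (μ ν : Measure Ω) : EReal :=
  if μ ≪ ν then eexp μ (fun ω => elog (μ.rnDeriv ν ω)) else ⊤

/-- `F : [0,∞] → [-∞,∞]` is the extension by limits of a concave utility `f : (0,∞) → ℝ`,
i.e. `F 0 = lim_{x↓0} f x`, `F ∞ = lim_{x→∞} f x`, and `F = f` in between. -/
def IsConcaveExtension (f : ℝ → ℝ) (F : ℝ≥0∞ → EReal) : Prop :=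
  ConcaveOn ℝ (Set.Ioi 0) f ∧
  (∀ x : ℝ≥0∞, x ≠ 0 → x ≠ ⊤ → F x = ((f x.toReal : ℝ) : EReal)) ∧
  Tendsto (fun x : ℝ => ((f x : ℝ) : EReal)) (nhdsWithin 0 (Set.Ioi 0)) (nhds (F 0)) ∧
  Tendsto (fun x : ℝ => ((f x : ℝ) : EReal)) atTop (nhds (F ⊤))


open scoped Topology

/-! An affine function `ℓ x = a * x + b` with `f ≤ ℓ` on `(0,∞)` also dominates the extension `F`
on `[0,∞]`, by passing to the limit at the endpoints, and `F` is the pointwise infimum of the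
countably many such `ℓ` with rational coefficients: near a point of `(0,∞)` or near `0` one uses
tangent lines of `f`, and at `∞` either a tangent line of negative slope or a constant.

For a single `ℓ`, moving the negative parts across turns `F(X) ≤ a X + b` into the inequality
`F(X)⁺ + a⁻ X + b⁻ ≤ F(X)⁻ + a⁺ X + b⁺` between nonnegative variables, which conditional
expectation preserves by linearity and monotonicity; hence `E[F(X) | m] ≤ a E[X | m] + b` almost
surely. A countable intersection of almost sure events then gives the inequality for the
infimum `F`. -/

namespace ConcaveOn

variable {S : Set ℝ} {f : ℝ → ℝ} {q x : ℝ}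

theorem le_rightDeriv_mul_add (hf : ConcaveOn ℝ S f) (hq : q ∈ interior S) (hx : x ∈ S) :
    f x ≤ derivWithin f (Ioi q) q * x + (f q - derivWithin f (Ioi q) q * q) := by
  have hg := hf.neg
  have hderiv : derivWithin (-f) (Ioi q) q = -derivWithin f (Ioi q) q := derivWithin.neg
  rcases lt_trichotomy x q with hxq | rfl | hqx
  · have h := (hg.slope_le_leftDeriv_of_mem_interior hx hq hxq).trans
      (hg.leftDeriv_le_rightDeriv_of_mem_interior hq)
    rw [hderiv, slope_def_field, div_le_iff₀ (sub_pos.2 hxq)] at h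
    simp only [Pi.neg_apply] at h
    linarith
  · simp only [add_sub_cancel, le_refl]
  · have h := hg.rightDeriv_le_slope_of_mem_interior hq hx hqx
    rw [hderiv, slope_def_field, le_div_iff₀ (sub_pos.2 hqx)] at h
    simp only [Pi.neg_apply] at h
    linarith

theorem antitoneOn_rightDeriv (hf : ConcaveOn ℝ S f) :
    AntitoneOn (fun x ↦ derivWithin f (Ioi x) x) (interior S) := fun x hx y hy hxy => by
  have h := hf.neg.monotoneOn_rightDeriv hx hy hxy
  simp only [derivWithin.neg] at h
  exact neg_le_neg_iff.1 h

end ConcaveOn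

theorem EReal.exists_rat_mul_add_lt {a b r : ℝ} {y : ℝ≥0∞} (h : (a : EReal) * y + b < r) :
    ∃ a' b' : ℚ, a ≤ a' ∧ b ≤ b' ∧ ((a' : ℝ) : EReal) * y + (b' : ℝ) < r := by
  induction y using ENNReal.recTopCoe with
  | top =>
    rcases lt_trichotomy a 0 with ha | rfl | ha
    · obtain ⟨a', haa', ha'⟩ := exists_rat_btwn ha
      obtain ⟨b', hbb'⟩ := exists_rat_gt b
      refine ⟨a', b', haa'.le, hbb'.le, ?_⟩
      simp [EReal.coe_mul_top_of_neg ha']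
    · simp only [EReal.coe_zero, zero_mul, zero_add, EReal.coe_lt_coe_iff] at h
      obtain ⟨b', hbb', hb'r⟩ := exists_rat_btwn h
      exact ⟨0, b', by simp, hbb'.le, by simpa using hb'r⟩
    · simp [EReal.coe_mul_top_of_pos ha] at h
  | coe t =>
    rw [EReal.coe_nnreal_eq_coe_real, ← EReal.coe_mul, ← EReal.coe_add,
      EReal.coe_lt_coe_iff] at h
    -- enlarge both coefficients by `δ`, which raises the value at `t` by less than `δ * (t + 1)`
    set δ := (r - (a * t + b)) / (t + 1)
    have ht : (0 : ℝ) ≤ t := t.coe_nonneg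
    have hδ : δ * (t + 1) = r - (a * t + b) := div_mul_cancel₀ _ (by positivity)
    obtain ⟨a', haa', ha'⟩ := exists_rat_btwn (lt_add_of_pos_right a (by positivity : 0 < δ))
    obtain ⟨b', hbb', hb'⟩ := exists_rat_btwn (lt_add_of_pos_right b (by positivity : 0 < δ))
    refine ⟨a', b', haa'.le, hbb'.le, ?_⟩
    rw [EReal.coe_nnreal_eq_coe_real, ← EReal.coe_mul, ← EReal.coe_add, EReal.coe_lt_coe_iff]
    nlinarith [mul_le_mul_of_nonneg_right ha'.le ht]

theorem ENNReal.toEReal_sub_le_toEReal_sub_iff {p n P N : ℝ≥0∞} (hPN : P ≠ ⊤ ∨ N ≠ ⊤) :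
    (p : EReal) - n ≤ (P : EReal) - N ↔ p + N ≤ n + P := by
  induction p using ENNReal.recTopCoe <;> induction n using ENNReal.recTopCoe <;>
    induction P using ENNReal.recTopCoe <;> induction N using ENNReal.recTopCoe <;>
    simp_all [EReal.coe_nnreal_eq_coe_real, ← EReal.coe_sub, ← ENNReal.coe_add,
      ← NNReal.coe_le_coe, sub_add_eq_add_sub, le_sub_iff_add_le, add_comm]

theorem erealPos_sub_erealPos_neg (u : EReal) : (erealPos u : EReal) - erealPos (-u) = u := by
  induction u <;> simp [erealPos, ← EReal.coe_sub]

theorem EReal.coe_mul_add_eq_sub (a b : ℝ) (y : ℝ≥0∞) :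
    (a : EReal) * y + b = ((ENNReal.ofReal a * y + ENNReal.ofReal b : ℝ≥0∞) : EReal) -
      ((ENNReal.ofReal (-a) * y + ENNReal.ofReal (-b) : ℝ≥0∞) : EReal) := by
  induction y using ENNReal.recTopCoe with
  | top =>
    rcases lt_trichotomy a 0 with ha | rfl | ha
    · simp [ha, ha.le, EReal.coe_mul_top_of_neg]
    · simp [← EReal.coe_sub]
    · simp [ha, ha.le, EReal.coe_mul_top_of_pos]
  | coe t =>
    simp only [← ENNReal.ofReal_coe_nnreal, ← ENNReal.ofReal_mul' (NNReal.coe_nonneg _),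
      EReal.coe_ennreal_ofReal, EReal.coe_ennreal_add, ← EReal.coe_mul, ← EReal.coe_add,
      ← EReal.coe_sub, EReal.coe_eq_coe_iff, max_eq_left (NNReal.coe_nonneg _), neg_mul]
    linarith [max_zero_sub_eq_self (a * t), max_zero_sub_eq_self b]

theorem ENNReal.ofReal_mul_add_ne_top_or (a b : ℝ) (y : ℝ≥0∞) :
    ENNReal.ofReal a * y + ENNReal.ofReal b ≠ ⊤ ∨
      ENNReal.ofReal (-a) * y + ENNReal.ofReal (-b) ≠ ⊤ := by
  rcases le_total a 0 with ha | ha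
  · left; simp [ENNReal.ofReal_of_nonpos ha]
  · right; simp [ENNReal.ofReal_of_nonpos (neg_nonpos.2 ha)]

namespace IsConcaveExtension

variable {f : ℝ → ℝ} {F : ℝ≥0∞ → EReal}

theorem le_mul_add (hF : IsConcaveExtension f F) {a b : ℝ}
    (hab : ∀ x, 0 < x → f x ≤ a * x + b) (y : ℝ≥0∞) : F y ≤ a * y + b := by
  obtain ⟨-, hmid, h0, htop⟩ := hF
  have of_tendsto (l : Filter ℝ) [l.NeBot] (e : ℝ≥0∞)
      (hfe : Tendsto (fun x : ℝ => ((f x : ℝ) : EReal)) l (𝓝 (F e)))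
      (he : Tendsto (fun x : ℝ => (x : EReal)) l (𝓝 (e : EReal))) (hpos : ∀ᶠ x in l, 0 < x) :
      F e ≤ a * e + b := by
    have hmul := EReal.Tendsto.const_mul he (Or.inl (EReal.coe_ne_bot a))
      (Or.inl (EReal.coe_ne_top a))
    have hline : Tendsto (fun x : ℝ => (a : EReal) * x + b) l (𝓝 ((a : EReal) * e + b)) :=
      (EReal.continuousAt_add (Or.inr (EReal.coe_ne_bot b))
        (Or.inr (EReal.coe_ne_top b))).tendsto.comp (hmul.prodMk_nhds tendsto_const_nhds)
    exact le_of_tendsto_of_tendsto hfe hline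
      (hpos.mono fun x hx => EReal.coe_le_coe_iff.2 (hab x hx))
  rcases eq_or_ne y 0 with rfl | hy0
  · refine of_tendsto (𝓝[>] 0) 0 h0 ?_ self_mem_nhdsWithin
    simpa using (continuous_coe_real_ereal.tendsto 0).mono_left nhdsWithin_le_nhds
  rcases eq_or_ne y ⊤ with rfl | hytop
  · exact of_tendsto atTop ⊤ htop EReal.tendsto_coe_atTop (eventually_gt_atTop 0)
  rw [hmid y hy0 hytop, ← EReal.coe_ennreal_toReal hytop]
  exact_mod_cast hab _ (ENNReal.toReal_pos hy0 hytop)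

theorem exists_mul_add_lt_of_lt_at_zero (hF : IsConcaveExtension f F) {r : ℝ} (hr : F 0 < r) :
    ∃ a b : ℝ, (∀ x, 0 < x → f x ≤ a * x + b) ∧ (a : EReal) * (0 : ℝ≥0∞) + b < r := by
  set s := fun q => derivWithin f (Ioi q) q
  obtain ⟨r', hr'F, hr'r⟩ := EReal.lt_iff_exists_real_btwn.1 hr
  have hfr' : ∀ᶠ x in 𝓝[>] 0, f x < r' :=
    (hF.2.2.1.eventually_lt_const hr'F).mono fun x hx => EReal.coe_lt_coe_iff.1 hx
  have hsmall : ∀ᶠ x in 𝓝[>] (0 : ℝ), -s 1 * x < r - r' := by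
    have : Tendsto (fun x => -s 1 * x) (𝓝 0) (𝓝 0) := by
      simpa using (continuous_const_mul (-s 1)).tendsto 0
    exact (this.eventually (gt_mem_nhds (sub_pos.2 (EReal.coe_lt_coe_iff.1 hr'r)))).filter_mono
      nhdsWithin_le_nhds
  obtain ⟨q, hfq, hq, hq0, hq1⟩ :=
    (hfr'.and (hsmall.and (eventually_mem_nhdsWithin.and (Ioo_mem_nhdsGT zero_lt_one)))).exists
  -- the intercept `f q - s q * q` of the tangent at `q` is small since `s 1 ≤ s q`
  have hsq : s 1 ≤ s q :=
    hF.1.antitoneOn_rightDeriv (by simp [hq0]) (by simp) hq1.2.le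
  refine ⟨s q, f q - s q * q,
    fun x hx => hF.1.le_rightDeriv_mul_add (by rwa [interior_Ioi]) hx, ?_⟩
  simp only [EReal.coe_ennreal_zero, mul_zero, zero_add, EReal.coe_lt_coe_iff]
  nlinarith

theorem exists_mul_add_lt_of_lt_at_top (hF : IsConcaveExtension f F) {r : ℝ} (hr : F ⊤ < r) :
    ∃ a b : ℝ, (∀ x, 0 < x → f x ≤ a * x + b) ∧ (a : EReal) * (⊤ : ℝ≥0∞) + b < r := by
  by_cases hdecr : ∃ q, 0 < q ∧ derivWithin f (Ioi q) q < 0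
  · obtain ⟨q, hq, hneg⟩ := hdecr
    refine ⟨_, _, fun x hx => hF.1.le_rightDeriv_mul_add (by rwa [interior_Ioi]) hx, ?_⟩
    simp [EReal.coe_mul_top_of_neg hneg]
  · simp only [not_exists, not_and, not_lt] at hdecr
    have hmono : ∀ x q, 0 < x → x ≤ q → f x ≤ f q := fun x q hx hxq => by
      have := hF.1.le_rightDeriv_mul_add (q := q)
        (by rw [interior_Ioi]; exact hx.trans_le hxq) hx
      nlinarith [hdecr q (hx.trans_le hxq)]
    obtain ⟨r', hr'F, hr'r⟩ := EReal.lt_iff_exists_real_btwn.1 hr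
    refine ⟨0, r', fun x hx => ?_, by simpa using hr'r⟩
    have hfF : ((f x : ℝ) : EReal) ≤ F ⊤ :=
      ge_of_tendsto hF.2.2.2 ((eventually_ge_atTop x).mono fun q hxq =>
        EReal.coe_le_coe_iff.2 (hmono x q hx hxq))
    simpa using EReal.coe_lt_coe_iff.1 (hfF.trans_lt hr'F) |>.le

theorem exists_mul_add_lt_of_lt (hF : IsConcaveExtension f F) {y : ℝ≥0∞} {r : ℝ}
    (hr : F y < r) : ∃ a b : ℝ, (∀ x, 0 < x → f x ≤ a * x + b) ∧ (a : EReal) * y + b < r := by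
  rcases eq_or_ne y 0 with rfl | hy0
  · exact hF.exists_mul_add_lt_of_lt_at_zero hr
  rcases eq_or_ne y ⊤ with rfl | hytop
  · exact hF.exists_mul_add_lt_of_lt_at_top hr
  have ht := ENNReal.toReal_pos hy0 hytop
  refine ⟨_, _, fun x hx => hF.1.le_rightDeriv_mul_add (by rwa [interior_Ioi]) hx, ?_⟩
  rw [hF.2.1 y hy0 hytop] at hr
  rw [← EReal.coe_ennreal_toReal hytop, ← EReal.coe_mul, ← EReal.coe_add]
  convert hr using 2
  ring

theorem le_of_forall_rat_mul_add (hF : IsConcaveExtension f F) {z : EReal} {y : ℝ≥0∞}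
    (h : ∀ a b : ℚ, (∀ x, 0 < x → f x ≤ a * x + b) → z ≤ ((a : ℝ) : EReal) * y + (b : ℝ)) :
    z ≤ F y :=
  EReal.le_of_forall_lt_iff_le.1 fun r hr => by
    obtain ⟨a, b, hab, hlt⟩ := hF.exists_mul_add_lt_of_lt hr
    obtain ⟨a', b', haa', hbb', hlt'⟩ := EReal.exists_rat_mul_add_lt hlt
    refine (h a' b' fun x hx => (hab x hx).trans ?_).trans hlt'.le
    nlinarith

end IsConcaveExtension

namespace IsCondExpNN

variable {Ω : Type*} {mΩ : MeasurableSpace Ω} {μ : Measure Ω} {m : MeasurableSpace Ω}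
  {h h' g g' : Ω → ℝ≥0∞}

theorem add (hm : m ≤ mΩ) (hg : IsCondExpNN m μ h g) (hg' : IsCondExpNN m μ h' g')
    (hh' : Measurable[mΩ] h') : IsCondExpNN m μ (fun ω => h ω + h' ω) (fun ω => g ω + g' ω) :=
  ⟨hg.1.add hg'.1, fun A hA => by
    rw [lintegral_add_right _ (hg'.1.mono hm le_rfl), lintegral_add_right _ hh', hg.2 A hA,
      hg'.2 A hA]⟩

theorem const_mul_add (hm : m ≤ mΩ) (hg : IsCondExpNN m μ h g) (hh : Measurable[mΩ] h)
    (c d : ℝ≥0∞) : IsCondExpNN m μ (fun ω => c * h ω + d) (fun ω => c * g ω + d) :=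
  ⟨(hg.1.const_mul c).add measurable_const, fun A hA => by
    rw [lintegral_add_right _ measurable_const, lintegral_add_right _ measurable_const,
      lintegral_const_mul c (hg.1.mono hm le_rfl), lintegral_const_mul c hh, hg.2 A hA]⟩

theorem ae_le [IsFiniteMeasure μ] (hm : m ≤ mΩ) (hg : IsCondExpNN m μ h g)
    (hg' : IsCondExpNN m μ h' g') (hhh' : h ≤ᵐ[μ] h') : g ≤ᵐ[μ] g' := by
  refine ae_le_of_ae_le_trim (hm := hm) ?_
  refine ae_le_of_forall_setLIntegral_le_of_sigmaFinite hg.1 fun A hA _ => ?_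
  rw [restrict_trim hm μ hA, lintegral_trim hm hg.1, lintegral_trim hm hg'.1, hg.2 A hA,
    hg'.2 A hA]
  exact lintegral_mono_ae (ae_restrict_of_ae hhh')

theorem sub_le_mul_add [IsFiniteMeasure μ] (hm : m ≤ mΩ) {X CX CP CN : Ω → ℝ≥0∞}
    {G : Ω → EReal} (hX : Measurable[mΩ] X) (hCX : IsCondExpNN m μ X CX)
    (hCP : IsCondExpNN m μ (fun ω => erealPos (G ω)) CP)
    (hCN : IsCondExpNN m μ (fun ω => erealPos (-(G ω))) CN) {a b : ℝ}
    (hG : ∀ ω, G ω ≤ a * X ω + b) :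
    ∀ᵐ ω ∂μ, (CP ω : EReal) - CN ω ≤ a * CX ω + b := by
  set P : ℝ≥0∞ → ℝ≥0∞ := fun y => ENNReal.ofReal a * y + ENNReal.ofReal b
  set N : ℝ≥0∞ → ℝ≥0∞ := fun y => ENNReal.ofReal (-a) * y + ENNReal.ofReal (-b)
  have hmove (y p n : ℝ≥0∞) : (p : EReal) - n ≤ a * y + b ↔ p + N y ≤ n + P y := by
    rw [EReal.coe_mul_add_eq_sub]
    exact ENNReal.toEReal_sub_le_toEReal_sub_iff (ENNReal.ofReal_mul_add_ne_top_or a b y)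
  have hPX : Measurable[mΩ] fun ω => P (X ω) := (hX.const_mul _).add measurable_const
  have hNX : Measurable[mΩ] fun ω => N (X ω) := (hX.const_mul _).add measurable_const
  have hle : ∀ᵐ ω ∂μ, CP ω + N (CX ω) ≤ CN ω + P (CX ω) :=
    (hCP.add hm (hCX.const_mul_add hm hX _ _) hNX).ae_le hm
      (hCN.add hm (hCX.const_mul_add hm hX _ _) hPX)
      (Eventually.of_forall fun ω =>
        (hmove _ _ _).1 ((erealPos_sub_erealPos_neg _).trans_le (hG ω)))
  filter_upwards [hle] with ω hω using (hmove _ _ _).2 hω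

end IsCondExpNN

theorem rao_blackwell_stmt0_general
    {Ω : Type*} {mΩ : MeasurableSpace Ω} (μ : Measure Ω) [IsProbabilityMeasure μ]
    (m : MeasurableSpace Ω) (hm : m ≤ mΩ)
    (X : Ω → ℝ≥0∞) (hX : Measurable[mΩ] X)
    (f : ℝ → ℝ) (F : ℝ≥0∞ → EReal) (hF : IsConcaveExtension f F)
    -- `CX` is a version of `E[X | m]`
    (CX : Ω → ℝ≥0∞) (hCX : IsCondExpNN m μ X CX)
    -- `CP`, `CN` are versions of `E[(F(X))⁺ | m]`, `E[(F(X))⁻ | m]`, and `CF := CP - CN`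
    (CP CN : Ω → ℝ≥0∞)
    (hCP : IsCondExpNN m μ (fun ω => erealPos (F (X ω))) CP)
    (hCN : IsCondExpNN m μ (fun ω => erealPos (-(F (X ω)))) CN)
    (CF : Ω → EReal) (hCF : ∀ ω, CF ω = ((CP ω : EReal)) - ((CN ω : EReal))) :
    ∀ᵐ ω ∂μ, CF ω ≤ F (CX ω) := by
  have hlines : ∀ᵐ ω ∂μ, ∀ a b : ℚ, (∀ x, 0 < x → f x ≤ a * x + b) →
      CF ω ≤ ((a : ℝ) : EReal) * CX ω + (b : ℝ) := by
    simp only [ae_all_iff, eventually_imp_distrib_left]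
    intro a b hab
    filter_upwards [IsCondExpNN.sub_le_mul_add hm hX hCX hCP hCN
      fun ω => hF.le_mul_add hab (X ω)] with ω hω
    rwa [hCF]
  filter_upwards [hlines] with ω hω using hF.le_of_forall_rat_mul_add hω

/-- Generalized conditional Jensen inequality: if `X : Ω → [0,∞]` is measurable,
`f` is a concave utility extended to `[0,∞]` by limits as `F`, and `E[F(X)]` is
well-defined, then `E[F(X) | m] ≤ F(E[X | m])` almost surely, where the conditional
expectation of the extended-real variable `F(X)` is defined through its positive and
negative parts. -/
theorem rao_blackwell_stmt0
    {Ω : Type*} {mΩ : MeasurableSpace Ω} (μ : Measure Ω) [IsProbabilityMeasure μ]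
    (m : MeasurableSpace Ω) (hm : m ≤ mΩ)
    (X : Ω → ℝ≥0∞) (hX : Measurable[mΩ] X)
    (f : ℝ → ℝ) (F : ℝ≥0∞ → EReal) (hF : IsConcaveExtension f F)
    (hdef : ExpDefined μ (fun ω => F (X ω)))
    -- `CX` is a version of `E[X | m]`
    (CX : Ω → ℝ≥0∞) (hCX : IsCondExpNN m μ X CX)
    -- `CP`, `CN` are versions of `E[(F(X))⁺ | m]`, `E[(F(X))⁻ | m]`, and `CF := CP - CN`
    (CP CN : Ω → ℝ≥0∞)
    (hCP : IsCondExpNN m μ (fun ω => erealPos (F (X ω))) CP)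
    (hCN : IsCondExpNN m μ (fun ω => erealPos (-(F (X ω)))) CN)
    (CF : Ω → EReal) (hCF : ∀ ω, CF ω = ((CP ω : EReal)) - ((CN ω : EReal))) :
    ∀ᵐ ω ∂μ, CF ω ≤ F (CX ω) :=
  rao_blackwell_stmt0_general μ m hm X hX f F hF CX hCX CP CN hCP hCN CF hCF
end
end

section
/- Let S be sufficient for Θ, E an e-variable for Θ₀, G := E_Θ[E | S], and f : (0,∞) → ℝ a concave utility function extended to [0,∞] by limits. Then for every θ ∈ Θ, E_θ[f(G)] ≥ E_θ[f(E)], provided both expectations are well-defined as elements of [-∞,∞]. -/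
/-!
Conditional Jensen, done by hand because `E` need not be integrable and `F` may take the
values `±∞`; the inequality, with the negative parts moved across, is proved separately on the
`σ(S)`-measurable pieces `{G = 0}`, `{G = ∞}` and `{0 < G < ∞}`. On `{G = 0}` the defining
identity of `G` forces `E = 0` a.e. On `{G = ∞}`, either `F ≤ F ∞` everywhere, or `F ∞ = -∞`
and then `F` decreases at least linearly, so `∫ F(E)⁻ = ∞` because `∫ E = ∫ G = ∞`. On
`{0 < G < ∞}` the supporting line of `f` at `G`, whose slope `α(G)` (the right derivative) is
`σ(S)`-measurable, gives `F(E) ≤ F(G) + α(G) (E - G)`; the linear term integrates to zero once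
one restricts to the sets where `G ≤ n` and `|α(G)| ≤ n`.
-/
open MeasureTheory ENNReal Filter Set
open scoped Classical
noncomputable section

lemma ofReal_add_ofReal_neg_le {u v r s : ℝ} (hr : 0 ≤ r) (hs : 0 ≤ s) (h : u + r ≤ v + s) :
    ENNReal.ofReal u + ENNReal.ofReal (-v) + ENNReal.ofReal r
      ≤ ENNReal.ofReal v + ENNReal.ofReal (-u) + ENNReal.ofReal s := by
  rw [← ENNReal.toReal_le_toReal (by finiteness) (by finiteness)]
  simp only [ENNReal.toReal_add ENNReal.ofReal_ne_top ENNReal.ofReal_ne_top,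
    ENNReal.toReal_add (ENNReal.add_ne_top.2 ⟨ENNReal.ofReal_ne_top, ENNReal.ofReal_ne_top⟩)
      ENNReal.ofReal_ne_top, ENNReal.toReal_ofReal', max_eq_left hr, max_eq_left hs]
  linarith [max_zero_sub_max_neg_zero_eq_self u, max_zero_sub_max_neg_zero_eq_self v]

lemma erealPos_add_le_of_add_le {a b : EReal} {r s : ℝ≥0∞} (h : a + (r : EReal) ≤ b + (s : EReal)) :
    erealPos a + erealPos (-b) + r ≤ erealPos b + erealPos (-a) + s := by
  rcases eq_or_ne s ⊤ with rfl | hs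
  · simp
  rcases eq_or_ne a ⊥ with rfl | ha
  · simp [erealPos]
  rcases eq_or_ne b ⊤ with rfl | hb
  · simp [erealPos]
  lift s to NNReal using hs
  have hbs : b + s < ⊤ := EReal.add_lt_top hb (by simp)
  have hb' : b ≠ ⊥ := by
    rintro rfl
    simp [EReal.add_eq_bot_iff, ha] at h
  have har : a + r < ⊤ := h.trans_lt hbs
  lift r to NNReal using by rintro rfl; simp [EReal.add_top_of_ne_bot ha] at har
  lift a to ℝ using ⟨by rintro rfl; simp at har, ha⟩
  lift b to ℝ using ⟨hb, hb'⟩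
  rw [EReal.coe_nnreal_eq_coe_real, EReal.coe_nnreal_eq_coe_real, ← EReal.coe_add,
    ← EReal.coe_add, EReal.coe_le_coe_iff] at h
  simpa [erealPos] using ofReal_add_ofReal_neg_le r.2 s.2 h

lemma coe_ennreal_sub_le_sub_of_add_le {a₁ b₁ a₂ b₂ : ℝ≥0∞} (h₂ : a₂ ≠ ⊤ ∨ b₂ ≠ ⊤)
    (h : a₁ + b₂ ≤ a₂ + b₁) : (a₁ : EReal) - b₁ ≤ a₂ - b₂ := by
  rcases eq_or_ne b₁ ⊤ with rfl | hb₁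
  · simp
  rcases eq_or_ne a₂ ⊤ with rfl | ha₂
  · lift b₂ to NNReal using h₂.resolve_left (not_not.2 rfl)
    simp [EReal.coe_nnreal_eq_coe_real]
  have hfin : a₁ + b₂ ≠ ⊤ := ne_top_of_le_ne_top (by finiteness) h
  lift a₁ to NNReal using (ENNReal.add_ne_top.1 hfin).1
  lift b₂ to NNReal using (ENNReal.add_ne_top.1 hfin).2
  lift a₂ to NNReal using ha₂
  lift b₁ to NNReal using hb₁
  simp only [EReal.coe_nnreal_eq_coe_real, ← EReal.coe_sub, EReal.coe_le_coe_iff]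
  have : (a₁ : ℝ) + b₂ ≤ a₂ + b₁ := by exact_mod_cast h
  linarith

lemma coe_ofReal_mul_add_ofReal_neg_mul {d a b : ℝ} (ha : 0 ≤ a) (hb : 0 ≤ b) :
    ((ENNReal.ofReal d * ENNReal.ofReal a + ENNReal.ofReal (-d) * ENNReal.ofReal b : ℝ≥0∞) :
      EReal) = ((max d 0 * a + max (-d) 0 * b : ℝ) : EReal) := by
  have hpos : ∀ r : ℝ, ENNReal.ofReal (max r 0) = ENNReal.ofReal r := fun r ↦ by simp
  rw [← hpos d, ← hpos (-d), ← ENNReal.ofReal_mul (le_max_right _ _),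
    ← ENNReal.ofReal_mul (le_max_right _ _), ← ENNReal.ofReal_add (by positivity) (by positivity),
    EReal.coe_ennreal_ofReal, max_eq_left (by positivity)]

lemma measurable_erealPos : Measurable erealPos :=
  Measurable.ite (measurableSet_singleton ⊤) measurable_const
    (ENNReal.measurable_ofReal.comp measurable_ereal_toReal)

section ExpLE

variable {Ω : Type*} {mΩ : MeasurableSpace Ω} {μ : Measure Ω} {X Y : Ω → EReal}

/-- `E[X] ≤ E[Y]` with the negative parts moved across: it makes sense whether or not the
expectations are defined, and it adds up over the pieces of a partition of `Ω`. -/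
def ExpLE (μ : Measure Ω) (X Y : Ω → EReal) : Prop :=
  ∫⁻ ω, erealPos (X ω) ∂μ + ∫⁻ ω, erealPos (-(Y ω)) ∂μ
    ≤ ∫⁻ ω, erealPos (Y ω) ∂μ + ∫⁻ ω, erealPos (-(X ω)) ∂μ

lemma ExpLE.eexp_le (h : ExpLE μ X Y) (hY : ExpDefined μ Y) : eexp μ X ≤ eexp μ Y :=
  coe_ennreal_sub_le_sub_of_add_le (hY.imp LT.lt.ne LT.lt.ne) h

lemma expLE_of_ae_add_le {u v : Ω → ℝ≥0∞} (hY : Measurable Y) (hv : Measurable v)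
    (huv : ∫⁻ ω, u ω ∂μ = ∫⁻ ω, v ω ∂μ) (hv_fin : ∫⁻ ω, v ω ∂μ ≠ ⊤)
    (h : ∀ᵐ ω ∂μ, X ω + (u ω : EReal) ≤ Y ω + (v ω : EReal)) : ExpLE μ X Y := by
  refine (ENNReal.add_le_add_iff_right hv_fin).1 ?_
  calc _ = ∫⁻ ω, erealPos (X ω) ∂μ + ∫⁻ ω, erealPos (-(Y ω)) ∂μ + ∫⁻ ω, u ω ∂μ := by rw [huv]
    _ ≤ ∫⁻ ω, (erealPos (X ω) + erealPos (-(Y ω)) + u ω) ∂μ :=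
      (add_le_add_left (le_lintegral_add _ _) _).trans (le_lintegral_add _ _)
    _ ≤ ∫⁻ ω, (erealPos (Y ω) + erealPos (-(X ω)) + v ω) ∂μ :=
      lintegral_mono_ae (h.mono fun ω hω ↦ erealPos_add_le_of_add_le hω)
    _ = _ := by
      rw [lintegral_add_right _ hv,
        lintegral_add_left (f := fun ω ↦ erealPos (Y ω)) (measurable_erealPos.comp hY)]

lemma expLE_of_ae_le (hY : Measurable Y) (h : ∀ᵐ ω ∂μ, X ω ≤ Y ω) : ExpLE μ X Y :=
  expLE_of_ae_add_le (u := 0) (v := 0) hY measurable_const rfl (by simp) (by simpa using h)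

lemma ExpLE.of_restrict_compl {s : Set Ω} (hs : MeasurableSet s) (h₁ : ExpLE (μ.restrict s) X Y)
    (h₂ : ExpLE (μ.restrict sᶜ) X Y) : ExpLE μ X Y := by
  unfold ExpLE at *
  rw [← lintegral_add_compl (fun ω ↦ erealPos (X ω)) hs,
    ← lintegral_add_compl (fun ω ↦ erealPos (-(Y ω))) hs,
    ← lintegral_add_compl (fun ω ↦ erealPos (Y ω)) hs,
    ← lintegral_add_compl (fun ω ↦ erealPos (-(X ω))) hs, add_add_add_comm, add_add_add_comm (∫⁻ ω in s, erealPos (Y ω) ∂μ)]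
  exact add_le_add h₁ h₂

lemma ExpLE.restrict_iUnion {B : ℕ → Set Ω} (hB : Monotone B)
    (h : ∀ n, ExpLE (μ.restrict (B n)) X Y) : ExpLE (μ.restrict (⋃ n, B n)) X Y := by
  unfold ExpLE at *
  have hmono : ∀ g : Ω → ℝ≥0∞, Monotone fun n ↦ ∫⁻ ω in B n, g ω ∂μ :=
    fun g i j hij ↦ lintegral_mono_set (hB hij)
  simp only [setLIntegral_iUnion_of_directed _ hB.directed_le]
  rw [ENNReal.iSup_add_iSup_of_monotone (hmono _) (hmono _),
    ENNReal.iSup_add_iSup_of_monotone (hmono _) (hmono _)]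
  exact iSup_mono h

end ExpLE

lemma ConcaveOn.le_add_derivWithin_Ioi_mul_sub {S : Set ℝ} {f : ℝ → ℝ} {y t : ℝ}
    (hf : ConcaveOn ℝ S f) (hy : y ∈ interior S) (ht : t ∈ S) :
    f t ≤ f y + derivWithin f (Ioi y) y * (t - y) := by
  have hyS := interior_subset hy
  rcases lt_trichotomy t y with hty | rfl | hyt
  · have h_right_le_left : derivWithin f (Ioi y) y ≤ derivWithin f (Iio y) y := by
      simpa [derivWithin.neg] using hf.neg.leftDeriv_le_rightDeriv_of_mem_interior hy
    have h_left_le_slope := hf.leftDeriv_le_slope ht hyS hty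
      (by simpa using (hf.neg.differentiableWithinAt_Iio_of_mem_interior hy).neg)
    rw [slope_def_field, le_div_iff₀ (sub_pos.2 hty)] at h_left_le_slope
    nlinarith
  · simp
  · have h := hf.slope_le_rightDeriv hyS ht hyt
      (by simpa using (hf.neg.differentiableWithinAt_Ioi_of_mem_interior hy).neg)
    rw [slope_def_field, div_le_iff₀ (sub_pos.2 hyt)] at h
    linarith

namespace IsConcaveExtension

variable {f : ℝ → ℝ} {F : ℝ≥0∞ → EReal}

lemma le_line (hF : IsConcaveExtension f F) {y : ℝ} (hy : 0 < y) {x : ℝ≥0∞} (hx : x ≠ ⊤) :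
    F x ≤ ((f y + derivWithin f (Ioi y) y * (x.toReal - y) : ℝ) : EReal) := by
  obtain ⟨hconc, hmid, h0, -⟩ := hF
  have hy' : y ∈ interior (Ioi (0 : ℝ)) := by rwa [interior_Ioi]
  rcases eq_or_ne x 0 with rfl | hx0
  · have hline : Tendsto (fun t : ℝ ↦ ((f y + derivWithin f (Ioi y) y * (t - y) : ℝ) : EReal))
        (nhdsWithin 0 (Ioi 0)) (nhds ((f y + derivWithin f (Ioi y) y * (0 - y) : ℝ) : EReal)) :=
      ((continuous_coe_real_ereal.comp (by fun_prop)).tendsto 0).mono_left nhdsWithin_le_nhds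
    refine le_of_tendsto_of_tendsto h0 (by simpa using hline) ?_
    filter_upwards [self_mem_nhdsWithin] with t ht
    exact EReal.coe_le_coe_iff.2 (hconc.le_add_derivWithin_Ioi_mul_sub hy' ht)
  · rw [hmid x hx0 hx, EReal.coe_le_coe_iff]
    exact hconc.le_add_derivWithin_Ioi_mul_sub hy' (ENNReal.toReal_pos hx0 hx)

lemma top_le_line (hF : IsConcaveExtension f F) {y : ℝ} (hy : 0 < y)
    (hd : derivWithin f (Ioi y) y ≤ 0) (t : ℝ) :
    F ⊤ ≤ ((f y + derivWithin f (Ioi y) y * (t - y) : ℝ) : EReal) := by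
  have hy' : y ∈ interior (Ioi (0 : ℝ)) := by rwa [interior_Ioi]
  refine le_of_tendsto hF.2.2.2 ?_
  filter_upwards [eventually_ge_atTop t, eventually_ge_atTop y] with s hts hys
  have hs := hF.1.le_add_derivWithin_Ioi_mul_sub hy' (hy.trans_le hys : 0 < s)
  exact EReal.coe_le_coe_iff.2 (by nlinarith)

lemma top_eq_bot_of_derivWithin_neg (hF : IsConcaveExtension f F) {y : ℝ} (hy : 0 < y)
    (hd : derivWithin f (Ioi y) y < 0) : F ⊤ = ⊥ := by
  refine (EReal.eq_bot_iff_forall_lt _).2 fun M ↦ ?_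
  refine (hF.top_le_line hy hd.le (y + (M - 1 - f y) / derivWithin f (Ioi y) y)).trans_lt ?_
  rw [EReal.coe_lt_coe_iff, add_sub_cancel_left, mul_div_cancel₀ _ hd.ne]
  linarith

lemma coe_le_top_of_derivWithin_nonneg (hF : IsConcaveExtension f F)
    (hd : ∀ y, 0 < y → 0 ≤ derivWithin f (Ioi y) y) {t : ℝ} (ht : 0 < t) :
    ((f t : ℝ) : EReal) ≤ F ⊤ := by
  refine ge_of_tendsto hF.2.2.2 ?_
  filter_upwards [eventually_ge_atTop t] with s hts
  have hs : s ∈ interior (Ioi (0 : ℝ)) := by rw [interior_Ioi]; exact ht.trans_le hts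
  have := hF.1.le_add_derivWithin_Ioi_mul_sub hs ht
  exact EReal.coe_le_coe_iff.2 (by nlinarith [hd s (ht.trans_le hts)])

lemma le_top_of_top_ne_bot (hF : IsConcaveExtension f F) (htop : F ⊤ ≠ ⊥) (x : ℝ≥0∞) :
    F x ≤ F ⊤ := by
  have hd : ∀ y, 0 < y → 0 ≤ derivWithin f (Ioi y) y := fun y hy ↦
    not_lt.1 fun hd ↦ htop (hF.top_eq_bot_of_derivWithin_neg hy hd)
  rcases eq_or_ne x ⊤ with rfl | hxt
  · rfl
  rcases eq_or_ne x 0 with rfl | hx0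
  · refine le_of_tendsto hF.2.2.1 ?_
    filter_upwards [self_mem_nhdsWithin] with t ht
    exact hF.coe_le_top_of_derivWithin_nonneg hd ht
  · rw [hF.2.1 x hx0 hxt]
    exact hF.coe_le_top_of_derivWithin_nonneg hd (ENNReal.toReal_pos hx0 hxt)

lemma exists_derivWithin_neg (hF : IsConcaveExtension f F) (htop : F ⊤ = ⊥) :
    ∃ y, 0 < y ∧ derivWithin f (Ioi y) y < 0 := by
  by_contra! hd
  simpa [htop] using hF.coe_le_top_of_derivWithin_nonneg hd one_pos

lemma measurable (hF : IsConcaveExtension f F) : Measurable F := by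
  refine measurable_of_measurable_on_compl_finite {0, ⊤} (by simp)
    (ContinuousOn.domRestrict ?_).measurable
  have hf : ContinuousOn (fun x : ℝ≥0∞ ↦ ((f x.toReal : ℝ) : EReal)) ({0, ⊤}ᶜ) := by
    refine continuous_coe_real_ereal.comp_continuousOn
      ((hF.1.continuousOn isOpen_Ioi).comp (ENNReal.continuousOn_toReal.mono ?_) ?_)
    · intro x hx; simp_all
    · intro x hx
      simp only [mem_compl_iff, mem_insert_iff, mem_singleton_iff, not_or] at hx
      exact ENNReal.toReal_pos hx.1 hx.2
  refine hf.congr fun x hx ↦ ?_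
  simp only [mem_compl_iff, mem_insert_iff, mem_singleton_iff, not_or] at hx
  exact hF.2.1 x hx.1 hx.2

/-- The supporting line `F x ≤ f y + d (x - y)`, `d` the right derivative of `f` at `y`, with
the terms moved so that no subtraction of possibly infinite quantities occurs. -/
lemma add_le_add_supporting (hF : IsConcaveExtension f F) {y : ℝ} (hy : 0 < y) (x : ℝ≥0∞) :
    F x + ((ENNReal.ofReal (derivWithin f (Ioi y) y) * ENNReal.ofReal y
        + ENNReal.ofReal (-derivWithin f (Ioi y) y) * x : ℝ≥0∞) : EReal)
      ≤ ((f y : ℝ) : EReal) + ((ENNReal.ofReal (derivWithin f (Ioi y) y) * x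
        + ENNReal.ofReal (-derivWithin f (Ioi y) y) * ENNReal.ofReal y : ℝ≥0∞) : EReal) := by
  set d := derivWithin f (Ioi y) y
  rcases eq_or_ne x ⊤ with rfl | hx
  · rcases lt_trichotomy d 0 with hd | hd | hd
    · simp [hF.top_eq_bot_of_derivWithin_neg hy hd]
    · simpa [hd] using hF.top_le_line hy hd.le y
    · simp [ENNReal.mul_top (ENNReal.ofReal_pos.2 hd).ne']
  · obtain ⟨t, ht, rfl⟩ : ∃ t, 0 ≤ t ∧ x = ENNReal.ofReal t :=
      ⟨x.toReal, ENNReal.toReal_nonneg, (ENNReal.ofReal_toReal hx).symm⟩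
    have hline := hF.le_line hy hx
    rw [ENNReal.toReal_ofReal ht] at hline
    rw [coe_ofReal_mul_add_ofReal_neg_mul hy.le ht, coe_ofReal_mul_add_ofReal_neg_mul ht hy.le]
    refine (add_le_add_left hline _).trans_eq ?_
    rw [← EReal.coe_add, ← EReal.coe_add]
    congr 1
    linear_combination (y - t) * max_zero_sub_max_neg_zero_eq_self d

lemma exists_mul_le_erealPos_neg_add (hF : IsConcaveExtension f F) (htop : F ⊤ = ⊥) :
    ∃ c k : ℝ≥0∞, c ≠ 0 ∧ k ≠ ⊤ ∧ ∀ x, c * x ≤ erealPos (-(F x)) + k := by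
  obtain ⟨y, hy, hd⟩ := hF.exists_derivWithin_neg htop
  refine ⟨ENNReal.ofReal (-derivWithin f (Ioi y) y), erealPos (f y)
    + ENNReal.ofReal (-derivWithin f (Ioi y) y) * ENNReal.ofReal y,
    (ENNReal.ofReal_pos.2 (neg_pos.2 hd)).ne', by simp [erealPos, ENNReal.mul_eq_top], fun x ↦ ?_⟩
  have h := erealPos_add_le_of_add_le (hF.add_le_add_supporting hy x)
  simp only [ENNReal.ofReal_of_nonpos hd.le, zero_mul, zero_add] at h
  calc _ ≤ erealPos (F x) + erealPos (-(f y : EReal)) + _ := le_add_self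
    _ ≤ _ := h
    _ = _ := by ring

end IsConcaveExtension

namespace IsCondExpNN

variable {Ω : Type*} {m mΩ : MeasurableSpace Ω} {μ : Measure Ω} {E G : Ω → ℝ≥0∞}

lemma restrict (h : IsCondExpNN m μ E G) (hm : m ≤ mΩ) {s : Set Ω} (hs : MeasurableSet[m] s) :
    IsCondExpNN m (μ.restrict s) E G :=
  ⟨h.1, fun A hA ↦ by
    simp only [Measure.restrict_restrict (hm A hA)]
    exact h.2 _ (hA.inter hs)⟩

lemma lintegral_eq (h : IsCondExpNN m μ E G) : ∫⁻ ω, G ω ∂μ = ∫⁻ ω, E ω ∂μ := by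
  simpa using h.2 univ MeasurableSet.univ

/-- The defining property extends from indicators of `m`-sets to all `m`-measurable weights,
since it says that `μ.withDensity E` and `μ.withDensity G` agree on `m`. -/
lemma lintegral_mul_eq (h : IsCondExpNN m μ E G) (hm : m ≤ mΩ) (hE : Measurable E)
    {k : Ω → ℝ≥0∞} (hk : Measurable[m] k) :
    ∫⁻ ω, k ω * E ω ∂μ = ∫⁻ ω, k ω * G ω ∂μ := by
  have htrim : (μ.withDensity E).trim hm = (μ.withDensity G).trim hm := by
    refine @Measure.ext Ω m _ _ fun s hs ↦ ?_
    rw [trim_measurableSet_eq hm hs, trim_measurableSet_eq hm hs,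
      withDensity_apply _ (hm s hs), withDensity_apply _ (hm s hs), h.2 s hs]
  have hk' := hk.mono hm le_rfl
  calc ∫⁻ ω, k ω * E ω ∂μ = ∫⁻ ω, k ω ∂(μ.withDensity E) := by
        simp [lintegral_withDensity_eq_lintegral_mul _ hE hk', mul_comm]
    _ = ∫⁻ ω, k ω ∂(μ.withDensity G) := by
        rw [← lintegral_trim hm hk, htrim, lintegral_trim hm hk]
    _ = ∫⁻ ω, k ω * G ω ∂μ := by
        simp [lintegral_withDensity_eq_lintegral_mul _ (h.1.mono hm le_rfl) hk', mul_comm]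

end IsCondExpNN

section Regions

variable {Ω : Type*} {m mΩ : MeasurableSpace Ω} {μ : Measure Ω} {E G : Ω → ℝ≥0∞}
  {f : ℝ → ℝ} {F : ℝ≥0∞ → EReal}

lemma expLE_of_ae_eq_zero (hCE : IsCondExpNN m μ E G) (hm : m ≤ mΩ) (hE : Measurable E)
    (hF : Measurable F) (hG : ∀ᵐ ω ∂μ, G ω = 0) :
    ExpLE μ (fun ω ↦ F (E ω)) (fun ω ↦ F (G ω)) := by
  have hE0 : ∀ᵐ ω ∂μ, E ω = 0 := (lintegral_eq_zero_iff hE).1 <| by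
    rw [← hCE.lintegral_eq]
    exact (lintegral_congr_ae hG).trans lintegral_zero
  refine expLE_of_ae_le (hF.comp (hCE.1.mono hm le_rfl)) ?_
  filter_upwards [hE0, hG] with ω hEω hGω
  rw [hEω, hGω]

lemma expLE_of_ae_eq_top [IsFiniteMeasure μ] (hCE : IsCondExpNN m μ E G) (hm : m ≤ mΩ)
    (hE : Measurable E) (hF : IsConcaveExtension f F) (hG : ∀ᵐ ω ∂μ, G ω = ⊤) :
    ExpLE μ (fun ω ↦ F (E ω)) (fun ω ↦ F (G ω)) := by
  by_cases htop : F ⊤ = ⊥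
  swap
  · refine expLE_of_ae_le (hF.measurable.comp (hCE.1.mono hm le_rfl)) ?_
    filter_upwards [hG] with ω hω
    rw [hω]
    exact hF.le_top_of_top_ne_bot htop _
  rcases eq_or_ne μ 0 with rfl | hμ
  · simp [ExpLE]
  obtain ⟨c, k, hc, hk, hck⟩ := hF.exists_mul_le_erealPos_neg_add htop
  have hEtop : ∫⁻ ω, E ω ∂μ = ⊤ := by
    rw [← hCE.lintegral_eq, lintegral_congr_ae hG, lintegral_const,
      ENNReal.top_mul (Measure.measure_univ_ne_zero.2 hμ)]
  have hle : ⊤ ≤ ∫⁻ ω, erealPos (-(F (E ω))) ∂μ + k * μ univ :=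
    calc ⊤ = ∫⁻ ω, c * E ω ∂μ := by rw [lintegral_const_mul _ hE, hEtop, ENNReal.mul_top hc]
      _ ≤ ∫⁻ ω, (erealPos (-(F (E ω))) + k) ∂μ := lintegral_mono fun ω ↦ hck _
      _ = _ := by rw [lintegral_add_right _ measurable_const, lintegral_const]
  have hneg : ∫⁻ ω, erealPos (-(F (E ω))) ∂μ = ⊤ := by
    by_contra hne
    exact ENNReal.add_ne_top.2 ⟨hne, ENNReal.mul_ne_top hk (measure_ne_top _ _)⟩ (top_le_iff.1 hle)
  simp [ExpLE, hneg]

lemma expLE_of_ae_bounded [IsFiniteMeasure μ] (hCE : IsCondExpNN m μ E G) (hm : m ≤ mΩ)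
    (hE : Measurable E) (hF : IsConcaveExtension f F) {n : ℕ}
    (hG : ∀ᵐ ω ∂μ, G ω ≠ 0 ∧ G ω ≤ n ∧ |derivWithin f (Ioi (G ω).toReal) (G ω).toReal| ≤ n) :
    ExpLE μ (fun ω ↦ F (E ω)) (fun ω ↦ F (G ω)) := by
  set α : Ω → ℝ := fun ω ↦ derivWithin f (Ioi (G ω).toReal) (G ω).toReal
  have hα : Measurable[m] α :=
    (measurable_derivWithin_Ioi f).comp (ENNReal.measurable_toReal.comp hCE.1)
  set p : Ω → ℝ≥0∞ := fun ω ↦ ENNReal.ofReal (α ω)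
  set q : Ω → ℝ≥0∞ := fun ω ↦ ENNReal.ofReal (-α ω)
  have hp : Measurable[m] p := ENNReal.measurable_ofReal.comp hα
  have hq : Measurable[m] q := ENNReal.measurable_ofReal.comp hα.neg
  have hp' : Measurable p := hp.mono hm le_rfl
  have hGm : Measurable G := hCE.1.mono hm le_rfl
  have hfin : ∀ k : Ω → ℝ≥0∞, (∀ᵐ ω ∂μ, k ω ≤ n) → ∫⁻ ω, k ω * G ω ∂μ ≠ ⊤ := fun k hk ↦ by
    refine ne_top_of_le_ne_top
      (lintegral_const_lt_top (μ := μ) (c := (n : ℝ≥0∞) * n) (by finiteness)).ne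
      (lintegral_mono_ae ?_)
    filter_upwards [hk, hG] with ω hkω hGω
    exact mul_le_mul' hkω hGω.2.1
  have hpn : ∀ᵐ ω ∂μ, p ω ≤ n := hG.mono fun ω h ↦
    (ENNReal.ofReal_le_ofReal ((le_abs_self _).trans h.2.2)).trans_eq (ENNReal.ofReal_natCast n)
  have hqn : ∀ᵐ ω ∂μ, q ω ≤ n := hG.mono fun ω h ↦
    (ENNReal.ofReal_le_ofReal ((neg_le_abs _).trans h.2.2)).trans_eq (ENNReal.ofReal_natCast n)
  refine expLE_of_ae_add_le (u := fun ω ↦ p ω * G ω + q ω * E ω)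
    (v := fun ω ↦ p ω * E ω + q ω * G ω) (hF.measurable.comp hGm)
    ((hp'.fun_mul hE).add ((hq.mono hm le_rfl).fun_mul hGm)) ?_ ?_ ?_
  · rw [lintegral_add_left (hp'.fun_mul hGm), lintegral_add_left (hp'.fun_mul hE),
      hCE.lintegral_mul_eq hm hE hp, hCE.lintegral_mul_eq hm hE hq]
  · rw [lintegral_add_left (hp'.fun_mul hE), hCE.lintegral_mul_eq hm hE hp]
    exact ENNReal.add_ne_top.2 ⟨hfin p hpn, hfin q hqn⟩
  · filter_upwards [hG] with ω hω
    obtain ⟨h0, hn, -⟩ := hω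
    have hGt : G ω ≠ ⊤ := ne_top_of_le_ne_top (ENNReal.natCast_ne_top n) hn
    have h := hF.add_le_add_supporting (ENNReal.toReal_pos h0 hGt) (E ω)
    rwa [ENNReal.ofReal_toReal hGt, ← hF.2.1 _ h0 hGt] at h

lemma expLE_of_ae_ne_zero_ne_top [IsFiniteMeasure μ] (hCE : IsCondExpNN m μ E G)
    (hm : m ≤ mΩ) (hE : Measurable E) (hF : IsConcaveExtension f F)
    (hG : ∀ᵐ ω ∂μ, G ω ≠ 0 ∧ G ω ≠ ⊤) :
    ExpLE μ (fun ω ↦ F (E ω)) (fun ω ↦ F (G ω)) := by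
  set α : Ω → ℝ := fun ω ↦ derivWithin f (Ioi (G ω).toReal) (G ω).toReal
  set B : ℕ → Set Ω := fun n ↦ G ⁻¹' Iic (n : ℝ≥0∞) ∩ (fun ω ↦ |α ω|) ⁻¹' Iic (n : ℝ)
  have hα : Measurable[m] α :=
    (measurable_derivWithin_Ioi f).comp (ENNReal.measurable_toReal.comp hCE.1)
  have hB : ∀ n, MeasurableSet[m] (B n) := fun n ↦
    (hCE.1 measurableSet_Iic).inter ((continuous_abs.measurable.comp hα) measurableSet_Iic)
  have hB_mono : Monotone B := fun i j hij ↦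
    inter_subset_inter (preimage_mono (Iic_subset_Iic.2 (by exact_mod_cast hij)))
      (preimage_mono (Iic_subset_Iic.2 (by exact_mod_cast hij)))
  have hB_cover : ∀ᵐ ω ∂μ, ω ∈ ⋃ n, B n := hG.mono fun ω hω ↦ by
    obtain ⟨n, hn⟩ := exists_nat_ge (max (G ω).toReal |α ω|)
    refine mem_iUnion.2 ⟨n, ?_, (le_max_right _ _).trans hn⟩
    rw [mem_preimage, mem_Iic, ← ENNReal.ofReal_natCast,
      ENNReal.le_ofReal_iff_toReal_le hω.2 n.cast_nonneg]
    exact (le_max_left _ _).trans hn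
  rw [← Measure.restrict_eq_self_of_ae_mem hB_cover]
  refine ExpLE.restrict_iUnion hB_mono fun n ↦
    expLE_of_ae_bounded (n := n) (hCE.restrict hm (hB n)) hm hE hF ?_
  filter_upwards [ae_restrict_mem (hm _ (hB n)), ae_restrict_of_ae hG] with ω hωB hω
  exact ⟨hω.1, hωB⟩

end Regions

theorem expLE_of_isCondExpNN {Ω : Type*} {m mΩ : MeasurableSpace Ω} {μ : Measure Ω}
    [IsFiniteMeasure μ] {E G : Ω → ℝ≥0∞} {f : ℝ → ℝ} {F : ℝ≥0∞ → EReal}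
    (hCE : IsCondExpNN m μ E G) (hm : m ≤ mΩ) (hE : Measurable E)
    (hF : IsConcaveExtension f F) : ExpLE μ (fun ω ↦ F (E ω)) (fun ω ↦ F (G ω)) := by
  have h₀ : MeasurableSet[m] (G ⁻¹' {0}) := hCE.1 (measurableSet_singleton 0)
  have h_top : MeasurableSet[m] (G ⁻¹' {⊤}) := hCE.1 (measurableSet_singleton ⊤)
  refine ExpLE.of_restrict_compl (hm _ h₀) (expLE_of_ae_eq_zero (hCE.restrict hm h₀) hm hE
    hF.measurable (ae_restrict_mem (hm _ h₀))) ?_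
  have hCE' := hCE.restrict hm h₀.compl
  refine ExpLE.of_restrict_compl (hm _ h_top)
    (expLE_of_ae_eq_top (hCE'.restrict hm h_top) hm hE hF (ae_restrict_mem (hm _ h_top)))
    (expLE_of_ae_ne_zero_ne_top (hCE'.restrict hm h_top.compl) hm hE hF ?_)
  filter_upwards [ae_restrict_mem (hm _ h_top).compl,
    ae_restrict_of_ae (ae_restrict_mem (hm _ h₀).compl)] with ω hω_top hω₀
  exact ⟨hω₀, hω_top⟩

theorem rao_blackwell_stmt3_general
    {Ω Θ : Type*} {mΩ : MeasurableSpace Ω} (P : Θ → Measure Ω)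
    [∀ θ, IsProbabilityMeasure (P θ)]
    (m : MeasurableSpace Ω) (hsuf : IsSufficient m P Set.univ)
    (E : Ω → ℝ≥0∞) (hE : Measurable[mΩ] E)
    (G : Ω → ℝ≥0∞) (hG : IsUnivCondExpNN m P Set.univ E G)
    (f : ℝ → ℝ) (F : ℝ≥0∞ → EReal) (hF : IsConcaveExtension f F) :
    ∀ θ : Θ, ExpDefined (P θ) (fun ω => F (E ω)) → ExpDefined (P θ) (fun ω => F (G ω)) →
      eexp (P θ) (fun ω => F (E ω)) ≤ eexp (P θ) (fun ω => F (G ω)) := fun θ _ hG_def ↦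
  (expLE_of_isCondExpNN (hG.2 θ (mem_univ θ)) hsuf.1 hE hF).eexp_le hG_def

/-- Rao–Blackwellization improves expected concave utility: with `S` sufficient for `Θ`,
`E` an e-variable for `Θ₀`, `G = E_Θ[E | S]`, and `F` a concave utility extended to `[0,∞]`
by limits, for every `θ ∈ Θ`, `E_θ[F(G)] ≥ E_θ[F(E)]` whenever both expectations are
well-defined. -/
theorem rao_blackwell_stmt3
    {Ω Θ : Type*} {mΩ : MeasurableSpace Ω} (P : Θ → Measure Ω)
    [∀ θ, IsProbabilityMeasure (P θ)]
    (Θ₀ Θ₁ : Set Θ) (hΘ : Θ₀ ∪ Θ₁ = Set.univ)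
    (m : MeasurableSpace Ω) (hsuf : IsSufficient m P Set.univ)
    (E : Ω → ℝ≥0∞) (hE : Measurable[mΩ] E)
    (hEval : ∀ θ ∈ Θ₀, ∫⁻ ω, E ω ∂(P θ) ≤ 1)
    (G : Ω → ℝ≥0∞) (hG : IsUnivCondExpNN m P Set.univ E G)
    (f : ℝ → ℝ) (F : ℝ≥0∞ → EReal) (hF : IsConcaveExtension f F) :
    ∀ θ : Θ, ExpDefined (P θ) (fun ω => F (E ω)) → ExpDefined (P θ) (fun ω => F (G ω)) →
      eexp (P θ) (fun ω => F (E ω)) ≤ eexp (P θ) (fun ω => F (G ω)) :=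
  rao_blackwell_stmt3_general P m hsuf E hE G hG f F hF
end
end

section
/- Fix θ ∈ Θ and suppose there exists a (sub-)probability measure P′ in the effective null hypothesis with D_KL(P_θ ∥ P′) < ∞ and P′ absolutely continuous with respect to P_θ and dominating P_θ. Then for every e-variable E for the null, the expectation E_θ[log E] is well-defined and satisfies −∞ ≤ E_θ[log E] ≤ D_KL(P_θ ∥ P′) < ∞. -/
open MeasureTheory ENNReal Filter Set
open scoped Classical
noncomputable section

/-! Write `D = dP_θ/dP'`. Pointwise, `log E - log D ≤ E/D - 1` (from `log t ≤ t - 1`), and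
`E_θ[E/D] ≤ E_{P'}[E] ≤ 1` because `P'` lies in the effective null; integrating gives
`E_θ[log E] ≤ E_θ[log D] = D_KL(P_θ ∥ P')`. To make the integration legitimate the argument is
run on positive and negative parts in `[0,∞]`: `D log⁻ D ≤ 1` bounds `E_θ[log⁻ D]` by `P'(Ω)`,
`D_KL < ∞` then makes `E_θ[log⁺ D]` finite, and `log⁺ E ≤ log⁺ D + E/D` makes `E_θ[log⁺ E]`
finite, so `E_θ[log E]` is defined. -/

lemma erealPos_eq_toENNReal : erealPos = EReal.toENNReal := rfl

lemma measurable_elog : Measurable elog :=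
  Measurable.ite measurableSet_eq measurable_const <| Measurable.ite measurableSet_eq
    measurable_const <| measurable_coe_real_ereal.comp <| Real.measurable_log.comp
    ENNReal.measurable_toReal

lemma Measurable.toENNReal_elog {α : Type*} {mα : MeasurableSpace α} {f : α → ℝ≥0∞}
    (hf : Measurable f) : Measurable fun a => (elog (f a)).toENNReal :=
  (measurable_elog.comp hf).ereal_toENNReal

lemma Measurable.toENNReal_neg_elog {α : Type*} {mα : MeasurableSpace α} {f : α → ℝ≥0∞}
    (hf : Measurable f) : Measurable fun a => (-elog (f a)).toENNReal :=
  (measurable_elog.comp hf).neg.ereal_toENNReal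

lemma elog_of_ne_zero_of_ne_top {x : ℝ≥0∞} (h0 : x ≠ 0) (htop : x ≠ ⊤) :
    elog x = (Real.log x.toReal : EReal) := by
  simp [elog, h0, htop]

lemma ENNReal.ofReal_add_ofReal_neg_add_le {x y a c : ℝ} (ha : 0 ≤ a) (hc : 0 ≤ c)
    (h : x + a ≤ y + c) :
    ENNReal.ofReal x + ENNReal.ofReal (-y) + ENNReal.ofReal a ≤
      ENNReal.ofReal y + ENNReal.ofReal (-x) + ENNReal.ofReal c := by
  have hpos (t : ℝ) : ENNReal.ofReal t = ENNReal.ofReal (max t 0) := by simp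
  rw [hpos x, hpos (-y), hpos y, hpos (-x),
    ← ENNReal.ofReal_add (by positivity) (by positivity), ← ENNReal.ofReal_add (by positivity) ha,
    ← ENNReal.ofReal_add (by positivity) (by positivity), ← ENNReal.ofReal_add (by positivity) hc]
  apply ENNReal.ofReal_le_ofReal
  rcases le_total x 0 with hx | hx <;> rcases le_total y 0 with hy | hy <;>
    simp only [max_eq_left, max_eq_right, neg_nonneg, neg_nonpos, hx, hy] <;> linarith

lemma toENNReal_elog_add_le {d : ℝ≥0∞} (hd0 : d ≠ 0) (hd : d ≠ ⊤) (e : ℝ≥0∞) :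
    (elog e).toENNReal + (-elog d).toENNReal + 1 ≤
      (elog d).toENNReal + (-elog e).toENNReal + e / d := by
  rcases eq_or_ne e 0 with rfl | he0
  · simp [elog]
  rcases eq_or_ne e ⊤ with rfl | he
  · simp [ENNReal.top_div_of_ne_top hd]
  have hd' : 0 < d.toReal := ENNReal.toReal_pos hd0 hd
  have he' : 0 < e.toReal := ENNReal.toReal_pos he0 he
  have hgibbs : Real.log e.toReal + 1 ≤ Real.log d.toReal + e.toReal / d.toReal := by
    have := Real.log_le_sub_one_of_pos (div_pos he' hd')
    rw [Real.log_div he'.ne' hd'.ne'] at this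
    linarith
  rw [elog_of_ne_zero_of_ne_top he0 he, elog_of_ne_zero_of_ne_top hd0 hd, ← EReal.coe_neg,
    ← EReal.coe_neg, EReal.real_coe_toENNReal, EReal.real_coe_toENNReal,
    EReal.real_coe_toENNReal, EReal.real_coe_toENNReal, ← ENNReal.ofReal_one,
    ← ENNReal.ofReal_toReal (ENNReal.div_ne_top he hd0), ENNReal.toReal_div]
  exact ENNReal.ofReal_add_ofReal_neg_add_le zero_le_one (by positivity) hgibbs

lemma toENNReal_elog_le {d : ℝ≥0∞} (hd0 : d ≠ 0) (hd : d ≠ ⊤) (e : ℝ≥0∞) :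
    (elog e).toENNReal ≤ (elog d).toENNReal + e / d := by
  rcases le_total (elog e) 0 with he | he
  · simp [EReal.toENNReal_of_nonpos he]
  have hneg : (-elog e).toENNReal = 0 :=
    EReal.toENNReal_of_nonpos (EReal.neg_le.mpr (by simpa using he))
  calc (elog e).toENNReal
      ≤ (elog e).toENNReal + (-elog d).toENNReal + 1 := le_self_add.trans le_self_add
    _ ≤ (elog d).toENNReal + (-elog e).toENNReal + e / d := toENNReal_elog_add_le hd0 hd e
    _ = (elog d).toENNReal + e / d := by rw [hneg, add_zero]

lemma mul_toENNReal_neg_elog_le_one {d : ℝ≥0∞} (hd : d ≠ ⊤) : d * (-elog d).toENNReal ≤ 1 := by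
  rcases eq_or_ne d 0 with rfl | hd0
  · simp
  have hd' : 0 < d.toReal := ENNReal.toReal_pos hd0 hd
  rw [elog_of_ne_zero_of_ne_top hd0 hd, ← EReal.coe_neg, EReal.real_coe_toENNReal,
    ← ENNReal.ofReal_toReal hd, ← ENNReal.ofReal_mul ENNReal.toReal_nonneg,
    ENNReal.ofReal_toReal hd]
  refine ENNReal.ofReal_le_one.mpr ?_
  have := Real.log_le_sub_one_of_pos (inv_pos.mpr hd')
  rw [Real.log_inv] at this
  have := mul_le_mul_of_nonneg_left this hd'.le
  rw [mul_sub, mul_inv_cancel₀ hd'.ne'] at this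
  linarith

lemma EReal.coe_ennreal_sub_le_coe_ennreal_sub {a b c d : ℝ≥0∞} (ha : a ≠ ⊤) (hc : c ≠ ⊤)
    (hd : d ≠ ⊤) (h : a + d ≤ c + b) : (a : EReal) - b ≤ c - d := by
  rcases eq_or_ne b ⊤ with rfl | hb
  · simp
  lift a to NNReal using ha
  lift b to NNReal using hb
  lift c to NNReal using hc
  lift d to NNReal using hd
  simp only [EReal.coe_nnreal_eq_coe_real, ← EReal.coe_sub, EReal.coe_le_coe_iff]
  have : (a : ℝ) + d ≤ c + b := mod_cast h
  linarith

section RadonNikodym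

variable {Ω : Type*} {mΩ : MeasurableSpace Ω} {μ ν : Measure Ω}

lemma lintegral_toENNReal_neg_elog_rnDeriv_le [SigmaFinite μ] [μ.HaveLebesgueDecomposition ν]
    (hμν : μ ≪ ν) :
    ∫⁻ ω, (-elog (μ.rnDeriv ν ω)).toENNReal ∂μ ≤ ν univ := by
  rw [← lintegral_rnDeriv_mul hμν (μ.measurable_rnDeriv ν).toENNReal_neg_elog.aemeasurable,
    ← lintegral_one]
  refine lintegral_mono_ae ?_
  filter_upwards [μ.rnDeriv_lt_top ν] with ω hω
  exact mul_toENNReal_neg_elog_le_one hω.ne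

lemma lintegral_div_rnDeriv_le [μ.HaveLebesgueDecomposition ν] (hμν : μ ≪ ν) {f : Ω → ℝ≥0∞}
    (hf : Measurable f) : ∫⁻ ω, f ω / μ.rnDeriv ν ω ∂μ ≤ ∫⁻ ω, f ω ∂ν := by
  rw [← lintegral_rnDeriv_mul hμν (f := fun ω => f ω / μ.rnDeriv ν ω)
    (hf.div (μ.measurable_rnDeriv ν)).aemeasurable]
  exact lintegral_mono fun ω => ENNReal.mul_div_le

lemma lintegral_toENNReal_elog_le [SigmaFinite μ] [μ.HaveLebesgueDecomposition ν] (hμν : μ ≪ ν)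
    {f : Ω → ℝ≥0∞} (hf : Measurable f) :
    ∫⁻ ω, (elog (f ω)).toENNReal ∂μ ≤
      ∫⁻ ω, (elog (μ.rnDeriv ν ω)).toENNReal ∂μ + ∫⁻ ω, f ω ∂ν := by
  grw [← lintegral_div_rnDeriv_le hμν hf]
  rw [← lintegral_add_left (μ.measurable_rnDeriv ν).toENNReal_elog]
  refine lintegral_mono_ae ?_
  filter_upwards [Measure.rnDeriv_pos hμν, hμν.ae_le (μ.rnDeriv_lt_top ν)] with ω hpos hlt
  exact toENNReal_elog_le hpos.ne' hlt.ne (f ω)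

lemma lintegral_toENNReal_elog_add_le [SigmaFinite μ] [μ.HaveLebesgueDecomposition ν]
    (hμν : μ ≪ ν) {f : Ω → ℝ≥0∞} (hf : Measurable f) :
    ∫⁻ ω, (elog (f ω)).toENNReal ∂μ + ∫⁻ ω, (-elog (μ.rnDeriv ν ω)).toENNReal ∂μ + μ univ ≤
      ∫⁻ ω, (elog (μ.rnDeriv ν ω)).toENNReal ∂μ + ∫⁻ ω, (-elog (f ω)).toENNReal ∂μ +
        ∫⁻ ω, f ω ∂ν := by
  have hD := μ.measurable_rnDeriv ν
  grw [← lintegral_div_rnDeriv_le hμν hf]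
  rw [← lintegral_one, ← lintegral_add_right _ hD.toENNReal_neg_elog,
    ← lintegral_add_right _ measurable_const, ← lintegral_add_right _ hf.toENNReal_neg_elog,
    ← lintegral_add_right _ (g := fun ω => f ω / μ.rnDeriv ν ω) (hf.div hD)]
  refine lintegral_mono_ae ?_
  filter_upwards [Measure.rnDeriv_pos hμν, hμν.ae_le (μ.rnDeriv_lt_top ν)] with ω hpos hlt
  exact toENNReal_elog_add_le hpos.ne' hlt.ne (f ω)

theorem eexp_elog_le_klDiv' [IsProbabilityMeasure μ] [IsFiniteMeasure ν] (hμν : μ ≪ ν)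
    (hKL : klDiv' μ ν < ⊤) {f : Ω → ℝ≥0∞} (hf : Measurable f) (hf1 : ∫⁻ ω, f ω ∂ν ≤ 1) :
    ExpDefined μ (fun ω => elog (f ω)) ∧ eexp μ (fun ω => elog (f ω)) ≤ klDiv' μ ν := by
  simp only [ExpDefined, eexp, klDiv', if_pos hμν, erealPos_eq_toENNReal] at hKL ⊢
  have hneg : ∫⁻ ω, (-elog (μ.rnDeriv ν ω)).toENNReal ∂μ ≠ ⊤ :=
    ((lintegral_toENNReal_neg_elog_rnDeriv_le hμν).trans_lt (measure_lt_top ν univ)).ne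
  have hpos : ∫⁻ ω, (elog (μ.rnDeriv ν ω)).toENNReal ∂μ ≠ ⊤ := by
    intro h
    rw [h, EReal.coe_ennreal_top, EReal.top_sub (by simpa using hneg)] at hKL
    exact lt_irrefl _ hKL
  have hfpos : ∫⁻ ω, (elog (f ω)).toENNReal ∂μ < ⊤ :=
    (lintegral_toENNReal_elog_le hμν hf).trans_lt
      (ENNReal.add_lt_top.mpr ⟨hpos.lt_top, hf1.trans_lt ENNReal.one_lt_top⟩)
  refine ⟨Or.inl hfpos, EReal.coe_ennreal_sub_le_coe_ennreal_sub hfpos.ne hpos hneg ?_⟩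
  have := lintegral_toENNReal_elog_add_le hμν hf
  grw [hf1, measure_univ] at this
  exact (ENNReal.add_le_add_iff_right ENNReal.one_ne_top).mp this

end RadonNikodym

theorem rao_blackwell_stmt5_general
    {Ω Θ : Type*} {mΩ : MeasurableSpace Ω} (P : Θ → Measure Ω)
    [∀ θ', IsProbabilityMeasure (P θ')]
    (Θ₀ : Set Θ) (θ : Θ)
    (P' : Measure Ω)
    -- `P'` belongs to the effective null hypothesis
    (heff : ∀ E : Ω → ℝ≥0∞, Measurable[mΩ] E → (∀ θ₀ ∈ Θ₀, ∫⁻ ω, E ω ∂(P θ₀) ≤ 1) →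
      ∫⁻ ω, E ω ∂P' ≤ 1)
    (hac' : P θ ≪ P')
    (hKL : klDiv' (P θ) P' < ⊤) :
    ∀ E : Ω → ℝ≥0∞, Measurable[mΩ] E → (∀ θ₀ ∈ Θ₀, ∫⁻ ω, E ω ∂(P θ₀) ≤ 1) →
      ExpDefined (P θ) (fun ω => elog (E ω)) ∧
      eexp (P θ) (fun ω => elog (E ω)) ≤ klDiv' (P θ) P' := by
  intro E hE hE1
  have hP' : P' univ ≤ 1 := by simpa using heff 1 measurable_const fun θ₀ _ => by simp
  have : IsFiniteMeasure P' := ⟨hP'.trans_lt one_lt_top⟩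
  exact eexp_elog_le_klDiv' hac' hKL hE (heff E hE hE1)

/-- If some element `P'` of the effective null (a nonnegative measure giving every e-variable
expectation at most one) satisfies `D_KL(P_θ ∥ P') < ∞`, `P' ≪ P_θ` and `P_θ ≪ P'`, then for
every e-variable `E` for the null, `E_θ[log E]` is well-defined and
`-∞ ≤ E_θ[log E] ≤ D_KL(P_θ ∥ P') < ∞`. -/
theorem rao_blackwell_stmt5
    {Ω Θ : Type*} {mΩ : MeasurableSpace Ω} (P : Θ → Measure Ω)
    [∀ θ', IsProbabilityMeasure (P θ')]
    (Θ₀ : Set Θ) (θ : Θ)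
    (P' : Measure Ω)
    -- `P'` belongs to the effective null hypothesis
    (heff : ∀ E : Ω → ℝ≥0∞, Measurable[mΩ] E → (∀ θ₀ ∈ Θ₀, ∫⁻ ω, E ω ∂(P θ₀) ≤ 1) →
      ∫⁻ ω, E ω ∂P' ≤ 1)
    (hac : P' ≪ P θ) (hac' : P θ ≪ P')
    (hKL : klDiv' (P θ) P' < ⊤) :
    ∀ E : Ω → ℝ≥0∞, Measurable[mΩ] E → (∀ θ₀ ∈ Θ₀, ∫⁻ ω, E ω ∂(P θ₀) ≤ 1) →
      ExpDefined (P θ) (fun ω => elog (E ω)) ∧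
      eexp (P θ) (fun ω => elog (E ω)) ≤ klDiv' (P θ) P' :=
  rao_blackwell_stmt5_general P Θ₀ θ P' heff hac' hKL
end
end

section
/- Let P′ be a sub-probability measure with P_θ ≪ P′, P′ ≪ P_θ, and D_KL(P_θ ∥ P′) < ∞. If E is a nonnegative random variable with E_{P′}[E] ≤ 1, then E_θ[log E] = D_KL(P_θ ∥ P′) + E_θ[log(dR/dP_θ)] where dR = E dP′, and E_θ[log(dR/dP_θ)] ∈ [−∞, 0]; hence E_θ[log E] ≤ D_KL(P_θ ∥ P′). -/
open MeasureTheory ENNReal Filter Set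
open scoped Classical
noncomputable section

/-!
Write `d = dμ/dP'` and `g = dR/dμ`. Since `R = E · P'` and `μ ≪ P'`, `g = E / d` holds `μ`-a.e., so
`log E = log d + log g` with `log d` a.e. finite. The positive part of `log d` is integrable because
`D_KL(μ ∥ P') < ∞`, and its negative part because `log⁻ d ≤ 1/d = dP'/dμ`, whose `μ`-integral is at
most `P'(Ω) ≤ 1`; hence the expectation splits as `D_KL(μ ∥ P') + E_μ[log g]`. Finally
`log g ≤ g - 1` and `∫ g dμ ≤ R(Ω) = E_{P'}[E] ≤ 1` give `E_μ[log g] ≤ 0`.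
-/

@[simp] lemma erealPos_bot : erealPos ⊥ = 0 := by simp [erealPos]

@[simp] lemma erealPos_top : erealPos ⊤ = ⊤ := by simp [erealPos]

@[simp] lemma erealPos_coe (r : ℝ) : erealPos r = ENNReal.ofReal r := by simp [erealPos]

lemma erealPos_eq_top_iff {a : EReal} : erealPos a = ⊤ ↔ a = ⊤ := by
  by_cases ha : a = ⊤ <;> simp [erealPos, ha]

lemma erealPos_add_le (a b : EReal) : erealPos (a + b) ≤ erealPos a + erealPos b := by
  induction a using EReal.rec <;> induction b using EReal.rec <;>
    simp [← EReal.coe_add, ENNReal.ofReal_add_le]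

-- `(a + b)⁺ - (a + b)⁻ = (a⁺ - a⁻) + (b⁺ - b⁻)`, rearranged so that no subtraction occurs.
lemma erealPos_add_add_erealPos_neg {a : EReal} (ha_top : a ≠ ⊤) (ha_bot : a ≠ ⊥) (b : EReal) :
    erealPos (a + b) + (erealPos (-a) + erealPos (-b)) =
      erealPos (-(a + b)) + (erealPos a + erealPos b) := by
  lift a to ℝ using ⟨ha_top, ha_bot⟩
  induction b using EReal.rec with
  | bot => simp [EReal.add_bot]
  | top => simp
  | coe b =>
    simp only [← EReal.coe_add, ← EReal.coe_neg, erealPos_coe, ENNReal.ofReal, ← ENNReal.coe_add,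
      ENNReal.coe_inj, ← NNReal.coe_inj, NNReal.coe_add, Real.coe_toNNReal']
    have := max_zero_sub_max_neg_zero_eq_self (a + b)
    have := max_zero_sub_max_neg_zero_eq_self a
    have := max_zero_sub_max_neg_zero_eq_self b
    linarith

@[simp] lemma elog_zero : elog 0 = ⊥ := by simp [elog]

@[simp] lemma elog_top : elog ⊤ = ⊤ := by simp [elog]

lemma elog_of_ne (x : ℝ≥0∞) (h0 : x ≠ 0) (ht : x ≠ ⊤) : elog x = Real.log x.toReal := by
  simp [elog, h0, ht]

lemma elog_inv (x : ℝ≥0∞) : elog x⁻¹ = -elog x := by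
  rcases eq_or_ne x 0 with rfl | h0
  · simp
  rcases eq_or_ne x ⊤ with rfl | ht
  · simp
  rw [elog_of_ne x h0 ht, elog_of_ne x⁻¹ (by simp [ht]) (by simp [h0]), ENNReal.toReal_inv,
    Real.log_inv, EReal.coe_neg]

lemma elog_mul_left {d : ℝ≥0∞} (h0 : d ≠ 0) (ht : d ≠ ⊤) (x : ℝ≥0∞) :
    elog (d * x) = elog d + elog x := by
  rw [elog_of_ne d h0 ht]
  rcases eq_or_ne x 0 with rfl | hx0
  · simp [EReal.add_bot]
  rcases eq_or_ne x ⊤ with rfl | hxt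
  · simp [ENNReal.mul_top h0]
  rw [elog_of_ne x hx0 hxt, elog_of_ne _ (mul_ne_zero h0 hx0) (ENNReal.mul_ne_top ht hxt),
    ENNReal.toReal_mul,
    Real.log_mul (ENNReal.toReal_pos h0 ht).ne' (ENNReal.toReal_pos hx0 hxt).ne', EReal.coe_add]

lemma erealPos_elog_le (x : ℝ≥0∞) : erealPos (elog x) ≤ x := by
  rcases eq_or_ne x 0 with rfl | h0
  · simp
  rcases eq_or_ne x ⊤ with rfl | ht
  · simp
  rw [elog_of_ne x h0 ht, erealPos_coe]
  exact (ENNReal.ofReal_le_ofReal (Real.log_le_self ENNReal.toReal_nonneg)).trans_eq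
    (ENNReal.ofReal_toReal ht)

-- `log x ≤ x - 1`, split into positive and negative parts so that it makes sense on `[0, ∞]`.
lemma erealPos_elog_add_one_le (x : ℝ≥0∞) : erealPos (elog x) + 1 ≤ x + erealPos (-elog x) := by
  rcases eq_or_ne x 0 with rfl | h0
  · simp
  rcases eq_or_ne x ⊤ with rfl | ht
  · simp
  rw [elog_of_ne x h0 ht, ← EReal.coe_neg, erealPos_coe, erealPos_coe]
  nth_rw 2 [← ENNReal.ofReal_toReal ht]
  have hlog := Real.log_le_sub_one_of_pos (ENNReal.toReal_pos h0 ht)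
  simp only [ENNReal.ofReal, ← ENNReal.coe_one, ← ENNReal.coe_add, ENNReal.coe_le_coe,
    ← NNReal.coe_le_coe, NNReal.coe_add, NNReal.coe_one, Real.coe_toNNReal']
  rcases le_total (Real.log x.toReal) 0 with h | h
  · simp only [max_eq_right h, max_eq_left (neg_nonneg.mpr h), max_eq_left ENNReal.toReal_nonneg]
    linarith
  · simp only [max_eq_left h, max_eq_right (neg_nonpos.mpr h), max_eq_left ENNReal.toReal_nonneg]
    linarith

lemma coe_sub_coe_eq_add_of_add_eq {p n p₁ n₁ p₂ n₂ : ℝ≥0∞} (hp : p ≠ ⊤) (hp₁ : p₁ ≠ ⊤)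
    (hn₁ : n₁ ≠ ⊤) (hp₂ : p₂ ≠ ⊤) (h : p + (n₁ + n₂) = n + (p₁ + p₂)) :
    (p : EReal) - n = (p₁ - n₁) + (p₂ - n₂) := by
  rcases eq_or_ne n₂ ⊤ with rfl | hn₂
  · have hn : n = ⊤ := by simpa [hp₁, hp₂] using h.symm
    simp [hn, EReal.sub_top, EReal.add_bot]
  have hn : n ≠ ⊤ := fun hn => by simp [hn, hp, hn₁, hn₂] at h
  lift p to NNReal using hp
  lift n to NNReal using hn
  lift p₁ to NNReal using hp₁
  lift n₁ to NNReal using hn₁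
  lift p₂ to NNReal using hp₂
  lift n₂ to NNReal using hn₂
  have h' := congrArg NNReal.toReal (ENNReal.coe_injective h)
  push_cast at h'
  simp only [EReal.coe_nnreal_eq_coe_real, ← EReal.coe_sub, ← EReal.coe_add, EReal.coe_eq_coe_iff]
  linarith

section Expectation

variable {Ω : Type*} {mΩ : MeasurableSpace Ω} {μ : Measure Ω}

lemma eexp_add {f g h : Ω → EReal} (hf : Measurable f) (hh : Measurable h)
    (hfgh : h =ᵐ[μ] f + g) (hf_pos : ∫⁻ ω, erealPos (f ω) ∂μ ≠ ⊤)
    (hf_neg : ∫⁻ ω, erealPos (-f ω) ∂μ ≠ ⊤) (hg_pos : ∫⁻ ω, erealPos (g ω) ∂μ ≠ ⊤) :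
    eexp μ h = eexp μ f + eexp μ g := by
  have hmeas {u : Ω → EReal} (hu : Measurable u) : Measurable fun ω => erealPos (u ω) :=
    measurable_erealPos.comp hu
  have hmeas_neg {u : Ω → EReal} (hu : Measurable u) : Measurable fun ω => erealPos (-u ω) :=
    measurable_erealPos.comp hu.neg
  have hf_fin : ∀ᵐ ω ∂μ, f ω ≠ ⊤ ∧ f ω ≠ ⊥ := by
    filter_upwards [ae_lt_top (hmeas hf) hf_pos, ae_lt_top (hmeas_neg hf) hf_neg] with ω h₁ h₂
    exact ⟨erealPos_eq_top_iff.not.mp h₁.ne, EReal.neg_eq_top_iff.not.mp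
      (erealPos_eq_top_iff.not.mp h₂.ne)⟩
  have h_pos_le : ∫⁻ ω, erealPos (h ω) ∂μ ≤
      (∫⁻ ω, erealPos (f ω) ∂μ) + ∫⁻ ω, erealPos (g ω) ∂μ := by
    rw [← lintegral_add_left (hmeas hf)]
    refine lintegral_mono_ae ?_
    filter_upwards [hfgh] with ω hω
    exact hω ▸ erealPos_add_le _ _
  have h_parts : (∫⁻ ω, erealPos (h ω) ∂μ) +
        ((∫⁻ ω, erealPos (-f ω) ∂μ) + ∫⁻ ω, erealPos (-g ω) ∂μ) =
      (∫⁻ ω, erealPos (-h ω) ∂μ) + ((∫⁻ ω, erealPos (f ω) ∂μ) + ∫⁻ ω, erealPos (g ω) ∂μ) := by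
    rw [← lintegral_add_left (hmeas_neg hf), ← lintegral_add_left (hmeas hh),
      ← lintegral_add_left (hmeas hf), ← lintegral_add_left (hmeas_neg hh)]
    refine lintegral_congr_ae ?_
    filter_upwards [hfgh, hf_fin] with ω hω hω_fin
    simp only [hω, Pi.add_apply]
    exact erealPos_add_add_erealPos_neg hω_fin.1 hω_fin.2 _
  exact coe_sub_coe_eq_add_of_add_eq (ne_top_of_le_ne_top (ENNReal.add_ne_top.mpr
    ⟨hf_pos, hg_pos⟩) h_pos_le) hf_pos hf_neg hg_pos h_parts

lemma lintegral_erealPos_ne_top_of_eexp_lt_top {f : Ω → EReal} (hf : eexp μ f < ⊤)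
    (hf_neg : ∫⁻ ω, erealPos (-f ω) ∂μ ≠ ⊤) : ∫⁻ ω, erealPos (f ω) ∂μ ≠ ⊤ := by
  intro hf_pos
  lift (∫⁻ ω, erealPos (-f ω) ∂μ) to NNReal using hf_neg with n hn
  simp [eexp, hf_pos, ← hn, EReal.coe_nnreal_eq_coe_real] at hf

lemma lintegral_erealPos_elog_le (g : Ω → ℝ≥0∞) :
    ∫⁻ ω, erealPos (elog (g ω)) ∂μ ≤ ∫⁻ ω, g ω ∂μ :=
  lintegral_mono fun ω => erealPos_elog_le (g ω)

lemma eexp_elog_nonpos [IsFiniteMeasure μ] {g : Ω → ℝ≥0∞} (hg : Measurable g)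
    (hg_int : ∫⁻ ω, g ω ∂μ ≤ μ univ) : eexp μ (fun ω => elog (g ω)) ≤ 0 := by
  rw [eexp, EReal.sub_nonpos, EReal.coe_ennreal_le_coe_ennreal_iff,
    ← ENNReal.add_le_add_iff_right (measure_ne_top μ univ)]
  calc (∫⁻ ω, erealPos (elog (g ω)) ∂μ) + μ univ
      = ∫⁻ ω, (erealPos (elog (g ω)) + 1) ∂μ := by
        rw [lintegral_add_right _ measurable_const, lintegral_one]
    _ ≤ ∫⁻ ω, (g ω + erealPos (-elog (g ω))) ∂μ :=
        lintegral_mono fun ω => erealPos_elog_add_one_le (g ω)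
    _ = (∫⁻ ω, g ω ∂μ) + ∫⁻ ω, erealPos (-elog (g ω)) ∂μ := lintegral_add_left hg _
    _ ≤ μ univ + ∫⁻ ω, erealPos (-elog (g ω)) ∂μ := by gcongr
    _ = (∫⁻ ω, erealPos (-elog (g ω)) ∂μ) + μ univ := add_comm _ _

end Expectation

section RadonNikodym

variable {Ω : Type*} {mΩ : MeasurableSpace Ω} {μ ν : Measure Ω} [SigmaFinite μ] [SigmaFinite ν]

lemma lintegral_erealPos_neg_elog_rnDeriv_le (hμν : μ ≪ ν) :
    ∫⁻ ω, erealPos (-elog (μ.rnDeriv ν ω)) ∂μ ≤ ν univ :=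
  calc ∫⁻ ω, erealPos (-elog (μ.rnDeriv ν ω)) ∂μ
      = ∫⁻ ω, erealPos (elog (μ.rnDeriv ν ω)⁻¹) ∂μ := by simp only [elog_inv]
    _ ≤ ∫⁻ ω, (μ.rnDeriv ν ω)⁻¹ ∂μ := lintegral_erealPos_elog_le _
    _ = ∫⁻ ω, ν.rnDeriv μ ω ∂μ := lintegral_congr_ae (Measure.inv_rnDeriv hμν)
    _ ≤ ν univ := Measure.lintegral_rnDeriv_le

-- `d(E ν)/dμ = E · dν/dμ` and `dν/dμ = (dμ/dν)⁻¹`, both `μ`-a.e.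
lemma ae_eq_rnDeriv_mul_rnDeriv_withDensity (hμν : μ ≪ ν) {E : Ω → ℝ≥0∞} (hE : Measurable E)
    (hE_fin : ∀ᵐ ω ∂ν, E ω ≠ ⊤) :
    ∀ᵐ ω ∂μ, E ω = μ.rnDeriv ν ω * (ν.withDensity E).rnDeriv μ ω := by
  filter_upwards [Measure.rnDeriv_withDensity_left hE.aemeasurable hE_fin,
    Measure.inv_rnDeriv hμν, Measure.rnDeriv_pos hμν,
    hμν.ae_le (Measure.rnDeriv_lt_top μ ν)] with ω h_dens h_inv h_pos h_fin
  rw [h_dens, ← h_inv, Pi.inv_apply, mul_comm (E ω), ← mul_assoc,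
    ENNReal.mul_inv_cancel h_pos.ne' h_fin.ne, one_mul]

end RadonNikodym

theorem rao_blackwell_stmt6_general
    {Ω : Type*} {mΩ : MeasurableSpace Ω} (μ : Measure Ω) [IsProbabilityMeasure μ]
    (P' : Measure Ω) (hsub : P' Set.univ ≤ 1)
    (hac : μ ≪ P')
    (hKL : klDiv' μ P' < ⊤)
    (E : Ω → ℝ≥0∞) (hE : Measurable[mΩ] E) (hExp : ∫⁻ ω, E ω ∂P' ≤ 1) :
    eexp μ (fun ω => elog (E ω)) =
        klDiv' μ P' + eexp μ (fun ω => elog ((P'.withDensity E).rnDeriv μ ω)) ∧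
      eexp μ (fun ω => elog ((P'.withDensity E).rnDeriv μ ω)) ≤ 0 ∧
      eexp μ (fun ω => elog (E ω)) ≤ klDiv' μ P' := by
  have : IsFiniteMeasure P' := ⟨hsub.trans_lt one_lt_top⟩
  set g := (P'.withDensity E).rnDeriv μ
  have hKL_eq : klDiv' μ P' = eexp μ (fun ω => elog (μ.rnDeriv P' ω)) := if_pos hac
  have hd_neg : ∫⁻ ω, erealPos (-elog (μ.rnDeriv P' ω)) ∂μ ≠ ⊤ :=
    ((lintegral_erealPos_neg_elog_rnDeriv_le hac).trans hsub).trans_lt one_lt_top |>.ne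
  have hd_pos := lintegral_erealPos_ne_top_of_eexp_lt_top (hKL_eq ▸ hKL) hd_neg
  have hg_int : ∫⁻ ω, g ω ∂μ ≤ μ univ := by
    refine Measure.lintegral_rnDeriv_le.trans ?_
    rwa [withDensity_apply _ MeasurableSet.univ, setLIntegral_univ, measure_univ]
  have hg_pos : ∫⁻ ω, erealPos (elog (g ω)) ∂μ ≠ ⊤ :=
    ((lintegral_erealPos_elog_le g).trans hg_int |>.trans_lt (measure_lt_top _ _)).ne
  have hE_fin : ∀ᵐ ω ∂P', E ω ≠ ⊤ := (ae_lt_top hE (hExp.trans_lt one_lt_top).ne).mono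
    fun _ => ne_of_lt
  have hlog_split : (fun ω => elog (E ω)) =ᵐ[μ]
      (fun ω => elog (μ.rnDeriv P' ω)) + fun ω => elog (g ω) := by
    filter_upwards [ae_eq_rnDeriv_mul_rnDeriv_withDensity hac hE hE_fin, Measure.rnDeriv_pos hac,
      hac.ae_le (Measure.rnDeriv_lt_top μ P')] with ω hω h_pos h_fin
    rw [hω]
    exact elog_mul_left h_pos.ne' h_fin.ne _
  have hsplit : eexp μ (fun ω => elog (E ω)) =
      eexp μ (fun ω => elog (μ.rnDeriv P' ω)) + eexp μ (fun ω => elog (g ω)) :=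
    eexp_add (measurable_elog.comp (Measure.measurable_rnDeriv _ _)) (measurable_elog.comp hE)
      hlog_split hd_pos hd_neg hg_pos
  have hg_nonpos := eexp_elog_nonpos (Measure.measurable_rnDeriv _ _) hg_int
  refine ⟨hKL_eq ▸ hsplit, hg_nonpos, ?_⟩
  rw [hsplit, hKL_eq]
  exact add_le_of_nonpos_right hg_nonpos

/-- Let `P'` be a sub-probability measure mutually absolutely continuous with the probability
measure `P_θ =: μ`, with `D_KL(μ ∥ P') < ∞`. If `E ≥ 0` satisfies `E_{P'}[E] ≤ 1`, then, with
`R := E · P'`, `E_μ[log E] = D_KL(μ ∥ P') + E_μ[log(dR/dμ)]`, where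
`E_μ[log(dR/dμ)] ∈ [-∞, 0]`; hence `E_μ[log E] ≤ D_KL(μ ∥ P')`. -/
theorem rao_blackwell_stmt6
    {Ω : Type*} {mΩ : MeasurableSpace Ω} (μ : Measure Ω) [IsProbabilityMeasure μ]
    (P' : Measure Ω) (hsub : P' Set.univ ≤ 1)
    (hac : μ ≪ P') (hac' : P' ≪ μ)
    (hKL : klDiv' μ P' < ⊤)
    (E : Ω → ℝ≥0∞) (hE : Measurable[mΩ] E) (hExp : ∫⁻ ω, E ω ∂P' ≤ 1) :
    eexp μ (fun ω => elog (E ω)) =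
        klDiv' μ P' + eexp μ (fun ω => elog ((P'.withDensity E).rnDeriv μ ω)) ∧
      eexp μ (fun ω => elog ((P'.withDensity E).rnDeriv μ ω)) ≤ 0 ∧
      eexp μ (fun ω => elog (E ω)) ≤ klDiv' μ P' :=
  rao_blackwell_stmt6_general μ P' hsub hac hKL E hE hExp
end
end

section
/- Let (S_t)_{t≥0} be a sufficient filtration for Θ with S_t ⊆ F_t, let (E_t) be an e-process for Θ₀ with respect to (F_t), and define G_t := E_Θ[E_t | S_t]. Then for any (S_t)-stopping time τ and any θ ∈ Θ, G_τ = E_θ[E_τ | S_τ] P_θ-almost surely. -/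
open MeasureTheory ENNReal Filter Set
open scoped Classical
noncomputable section

section StoppedValue

variable {Ω : Type*} {mΩ : MeasurableSpace Ω}

theorem setLIntegral_stoppedValue_eq_tsum {ι : Type*} [Countable ι] [Nonempty ι]
    (μ : Measure Ω) (f : ι → Ω → ℝ≥0∞) {τ : Ω → ι} {A : Set Ω}
    (hA : ∀ i, MeasurableSet (A ∩ {ω | τ ω = i})) :
    ∫⁻ ω in A, stoppedValue f (fun ω => (τ ω : WithTop ι)) ω ∂μ
      = ∑' i, ∫⁻ ω in A ∩ {ω | τ ω = i}, f i ω ∂μ := by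
  have hA_eq : A = ⋃ i, A ∩ {ω | τ ω = i} := by
    ext ω
    simp
  have hdisj : Pairwise (Function.onFun Disjoint fun i => A ∩ {ω | τ ω = i}) := fun i j hij =>
    Set.disjoint_left.mpr fun ω ⟨_, hi⟩ ⟨_, hj⟩ => hij (hi.symm.trans hj)
  conv_lhs => rw [hA_eq, lintegral_iUnion hA hdisj]
  refine tsum_congr fun i => setLIntegral_congr_fun (hA i) fun ω ⟨_, hω⟩ => ?_
  simp only [stoppedValue, show τ ω = i from hω, WithTop.untopD_coe]

theorem isUnivCondExpNN_stoppedValue {Θ : Type*} {P : Θ → Measure Ω} {T : Set Θ}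
    {𝓢 : Filtration ℕ mΩ} {τ : Ω → ℕ} (hτ : IsStoppingTime 𝓢 (fun ω => (τ ω : WithTop ℕ)))
    {E G : ℕ → Ω → ℝ≥0∞} (hG : ∀ t, IsUnivCondExpNN (𝓢 t) P T (E t) (G t)) :
    IsUnivCondExpNN hτ.measurableSpace P T (stoppedValue E fun ω => (τ ω : WithTop ℕ))
      (stoppedValue G fun ω => (τ ω : WithTop ℕ)) := by
  have hmeas : Measurable[hτ.measurableSpace] (stoppedValue G fun ω => (τ ω : WithTop ℕ)) :=
    measurable_stoppedValue (StronglyAdapted.isStronglyProgressive_of_discrete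
      fun t => (hG t).1.stronglyMeasurable) hτ
  refine ⟨hmeas, fun θ hθ => ⟨hmeas, fun A hA => ?_⟩⟩
  have hA_slice : ∀ t, MeasurableSet[𝓢 t] (A ∩ {ω | τ ω = t}) := fun t => by
    simpa using (hτ.measurableSet_inter_eq_iff A t).mp (hA.inter (hτ.measurableSet_eq' t))
  have hA_slice' : ∀ t, MeasurableSet (A ∩ {ω | τ ω = t}) := fun t => 𝓢.le t _ (hA_slice t)
  exact (setLIntegral_stoppedValue_eq_tsum _ G hA_slice').trans <|
    (tsum_congr fun t => ((hG t).2 θ hθ).2 _ (hA_slice t)).trans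
      (setLIntegral_stoppedValue_eq_tsum _ E hA_slice').symm

end StoppedValue

theorem rao_blackwell_stmt7_general
    {Ω Θ : Type*} {mΩ : MeasurableSpace Ω} (P : Θ → Measure Ω)
    (𝓢 : Filtration ℕ mΩ)
    (E : ℕ → Ω → ℝ≥0∞)
    -- `G t` is the universal conditional expectation `E_Θ[E t | 𝓢 t]`
    (G : ℕ → Ω → ℝ≥0∞)
    (hG : ∀ t, Measurable[𝓢 t] (G t) ∧ ∀ θ : Θ, ∀ A : Set Ω, MeasurableSet[𝓢 t] A →
      ∫⁻ ω in A, G t ω ∂(P θ) = ∫⁻ ω in A, E t ω ∂(P θ))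
    (τ : Ω → ℕ) (hτ : IsStoppingTime 𝓢 (fun ω => (τ ω : WithTop ℕ))) :
    Measurable[hτ.measurableSpace] (stoppedValue G (fun ω => (τ ω : WithTop ℕ))) ∧
      ∀ θ : Θ, ∀ A : Set Ω, MeasurableSet[hτ.measurableSpace] A →
        ∫⁻ ω in A, stoppedValue G (fun ω => (τ ω : WithTop ℕ)) ω ∂(P θ) = ∫⁻ ω in A, stoppedValue E (fun ω => (τ ω : WithTop ℕ)) ω ∂(P θ) := by
  obtain ⟨hmeas, hcondexp⟩ := isUnivCondExpNN_stoppedValue (T := Set.univ) hτ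
    fun t => ⟨(hG t).1, fun θ _ => ⟨(hG t).1, (hG t).2 θ⟩⟩
  exact ⟨hmeas, fun θ => (hcondexp θ trivial).2⟩

/-- With `(𝓢 t) ⊆ (𝓕 t)` a sufficient filtration for `Θ`, `(E t)` an e-process for `Θ₀`
w.r.t. `(𝓕 t)`, and `G t := E_Θ[E t | 𝓢 t]`, for every `(𝓢 t)`-stopping time `τ` and every
`θ ∈ Θ`, the stopped variable `G_τ` is a version of `E_θ[E_τ | 𝓢_τ]`. -/
theorem rao_blackwell_stmt7
    {Ω Θ : Type*} {mΩ : MeasurableSpace Ω} (P : Θ → Measure Ω)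
    [∀ θ, IsProbabilityMeasure (P θ)]
    (Θ₀ Θ₁ : Set Θ) (hΘ : Θ₀ ∪ Θ₁ = Set.univ)
    (𝓕 𝓢 : Filtration ℕ mΩ) (hle : ∀ t, 𝓢 t ≤ 𝓕 t)
    -- `(𝓢 t)` is a sufficient filtration: θ-free conditional expectations of
    -- `𝓕 t`-measurable nonnegative functions given `𝓢 t` exist
    (hsuf : ∀ t, ∀ h : Ω → ℝ≥0∞, Measurable[𝓕 t] h →
      ∃ g, Measurable[𝓢 t] g ∧ ∀ θ : Θ, ∀ A : Set Ω, MeasurableSet[𝓢 t] A →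
        ∫⁻ ω in A, g ω ∂(P θ) = ∫⁻ ω in A, h ω ∂(P θ))
    -- `(E t)` is an e-process for `Θ₀` w.r.t. `(𝓕 t)`
    (E : ℕ → Ω → ℝ≥0∞) (hEadp : ∀ t, Measurable[𝓕 t] (E t))
    (hEproc : ∀ σ : Ω → ℕ, IsStoppingTime 𝓕 (fun ω => (σ ω : WithTop ℕ)) → ∀ θ ∈ Θ₀,
      ∫⁻ ω, stoppedValue E (fun ω => (σ ω : WithTop ℕ)) ω ∂(P θ) ≤ 1)
    -- `G t` is the universal conditional expectation `E_Θ[E t | 𝓢 t]`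
    (G : ℕ → Ω → ℝ≥0∞)
    (hG : ∀ t, Measurable[𝓢 t] (G t) ∧ ∀ θ : Θ, ∀ A : Set Ω, MeasurableSet[𝓢 t] A →
      ∫⁻ ω in A, G t ω ∂(P θ) = ∫⁻ ω in A, E t ω ∂(P θ))
    (τ : Ω → ℕ) (hτ : IsStoppingTime 𝓢 (fun ω => (τ ω : WithTop ℕ))) :
    Measurable[hτ.measurableSpace] (stoppedValue G (fun ω => (τ ω : WithTop ℕ))) ∧
      ∀ θ : Θ, ∀ A : Set Ω, MeasurableSet[hτ.measurableSpace] A →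
        ∫⁻ ω in A, stoppedValue G (fun ω => (τ ω : WithTop ℕ)) ω ∂(P θ) = ∫⁻ ω in A, stoppedValue E (fun ω => (τ ω : WithTop ℕ)) ω ∂(P θ) :=
  rao_blackwell_stmt7_general P 𝓢 E G hG τ hτ
end
end

section
/- With the setup of the sufficient filtration (S_t) ⊆ (F_t) and e-process (E_t) for Θ₀, the process (G_t) with G_t := E_Θ[E_t | S_t] is an e-process for Θ₀ with respect to (S_t): for every (S_t)-stopping time τ and θ₀ ∈ Θ₀, E_{θ₀}[G_τ] ≤ 1. -/
/-!
Since `τ` is finite, `∫ G_τ dP_θ = ∑ₜ ∫_{τ = t} G t dP_θ`, and each event `{τ = t}` lies in `𝓢 t`,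
on which `G t` and `E t` have the same integrals under every `P_θ`; hence `E_θ[G_τ] = E_θ[E_τ]`.
An `𝓢`-stopping time is an `𝓕`-stopping time since `𝓢 ≤ 𝓕`, so the e-process bound for `E` applies.
-/
open MeasureTheory ENNReal Filter Set
open scoped Classical
noncomputable section

lemma lintegral_stoppedValue_eq_tsum {Ω : Type*} {mΩ : MeasurableSpace Ω} (μ : Measure Ω)
    (f : ℕ → Ω → ℝ≥0∞) {τ : Ω → ℕ} (hτ : ∀ t, MeasurableSet (τ ⁻¹' {t})) :
    ∫⁻ ω, stoppedValue f (fun ω => (τ ω : WithTop ℕ)) ω ∂μ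
      = ∑' t, ∫⁻ ω in τ ⁻¹' {t}, f t ω ∂μ := by
  rw [← setLIntegral_univ, ← preimage_univ (f := τ), ← iUnion_of_singleton, preimage_iUnion,
    lintegral_iUnion hτ (pairwise_disjoint_fiber τ)]
  refine tsum_congr fun t => setLIntegral_congr_fun (hτ t) fun ω hω => ?_
  rw [mem_preimage, mem_singleton_iff] at hω
  rw [stoppedValue, hω]
  rfl

lemma lintegral_stoppedValue_congr {Ω : Type*} {mΩ : MeasurableSpace Ω} {μ : Measure Ω}
    {𝓢 : Filtration ℕ mΩ} {f g : ℕ → Ω → ℝ≥0∞} {τ : Ω → ℕ}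
    (hτ : IsStoppingTime 𝓢 (fun ω => (τ ω : WithTop ℕ)))
    (hfg : ∀ t A, MeasurableSet[𝓢 t] A → ∫⁻ ω in A, f t ω ∂μ = ∫⁻ ω in A, g t ω ∂μ) :
    ∫⁻ ω, stoppedValue f (fun ω => (τ ω : WithTop ℕ)) ω ∂μ
      = ∫⁻ ω, stoppedValue g (fun ω => (τ ω : WithTop ℕ)) ω ∂μ := by
  have hlevel (t : ℕ) : MeasurableSet[𝓢 t] (τ ⁻¹' {t}) := by
    convert hτ.measurableSet_eq t using 1
    ext ω
    simp
  rw [lintegral_stoppedValue_eq_tsum μ f fun t => 𝓢.le t _ (hlevel t),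
    lintegral_stoppedValue_eq_tsum μ g fun t => 𝓢.le t _ (hlevel t)]
  exact tsum_congr fun t => hfg t _ (hlevel t)

theorem rao_blackwell_stmt8_general
    {Ω Θ : Type*} {mΩ : MeasurableSpace Ω} (P : Θ → Measure Ω)
    (Θ₀ : Set Θ)
    (𝓕 𝓢 : Filtration ℕ mΩ) (hle : ∀ t, 𝓢 t ≤ 𝓕 t)
    (E : ℕ → Ω → ℝ≥0∞)
    (hEproc : ∀ σ : Ω → ℕ, IsStoppingTime 𝓕 (fun ω => (σ ω : WithTop ℕ)) → ∀ θ ∈ Θ₀,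
      ∫⁻ ω, stoppedValue E (fun ω => (σ ω : WithTop ℕ)) ω ∂(P θ) ≤ 1)
    (G : ℕ → Ω → ℝ≥0∞)
    (hG : ∀ t, Measurable[𝓢 t] (G t) ∧ ∀ θ : Θ, ∀ A : Set Ω, MeasurableSet[𝓢 t] A →
      ∫⁻ ω in A, G t ω ∂(P θ) = ∫⁻ ω in A, E t ω ∂(P θ))
    (τ : Ω → ℕ) (hτ : IsStoppingTime 𝓢 (fun ω => (τ ω : WithTop ℕ))) :
    ∀ θ₀ ∈ Θ₀, ∫⁻ ω, stoppedValue G (fun ω => (τ ω : WithTop ℕ)) ω ∂(P θ₀) ≤ 1 := by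
  intro θ₀ hθ₀
  calc ∫⁻ ω, stoppedValue G (fun ω => (τ ω : WithTop ℕ)) ω ∂(P θ₀)
      = ∫⁻ ω, stoppedValue E (fun ω => (τ ω : WithTop ℕ)) ω ∂(P θ₀) :=
        lintegral_stoppedValue_congr hτ fun t => (hG t).2 θ₀
    _ ≤ 1 := hEproc τ (fun t => hle t _ (hτ t)) θ₀ hθ₀

/-- With `(𝓢 t) ⊆ (𝓕 t)` a sufficient filtration for `Θ` and `(E t)` an e-process for `Θ₀`
w.r.t. `(𝓕 t)`, the process `G t := E_Θ[E t | 𝓢 t]` is an e-process for `Θ₀` w.r.t.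
`(𝓢 t)`: for every `(𝓢 t)`-stopping time `τ` and `θ₀ ∈ Θ₀`, `E_{θ₀}[G_τ] ≤ 1`. -/
theorem rao_blackwell_stmt8
    {Ω Θ : Type*} {mΩ : MeasurableSpace Ω} (P : Θ → Measure Ω)
    [∀ θ, IsProbabilityMeasure (P θ)]
    (Θ₀ Θ₁ : Set Θ) (hΘ : Θ₀ ∪ Θ₁ = Set.univ)
    (𝓕 𝓢 : Filtration ℕ mΩ) (hle : ∀ t, 𝓢 t ≤ 𝓕 t)
    (hsuf : ∀ t, ∀ h : Ω → ℝ≥0∞, Measurable[𝓕 t] h →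
      ∃ g, Measurable[𝓢 t] g ∧ ∀ θ : Θ, ∀ A : Set Ω, MeasurableSet[𝓢 t] A →
        ∫⁻ ω in A, g ω ∂(P θ) = ∫⁻ ω in A, h ω ∂(P θ))
    (E : ℕ → Ω → ℝ≥0∞) (hEadp : ∀ t, Measurable[𝓕 t] (E t))
    (hEproc : ∀ σ : Ω → ℕ, IsStoppingTime 𝓕 (fun ω => (σ ω : WithTop ℕ)) → ∀ θ ∈ Θ₀,
      ∫⁻ ω, stoppedValue E (fun ω => (σ ω : WithTop ℕ)) ω ∂(P θ) ≤ 1)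
    (G : ℕ → Ω → ℝ≥0∞)
    (hG : ∀ t, Measurable[𝓢 t] (G t) ∧ ∀ θ : Θ, ∀ A : Set Ω, MeasurableSet[𝓢 t] A →
      ∫⁻ ω in A, G t ω ∂(P θ) = ∫⁻ ω in A, E t ω ∂(P θ))
    (τ : Ω → ℕ) (hτ : IsStoppingTime 𝓢 (fun ω => (τ ω : WithTop ℕ))) :
    ∀ θ₀ ∈ Θ₀, ∫⁻ ω, stoppedValue G (fun ω => (τ ω : WithTop ℕ)) ω ∂(P θ₀) ≤ 1 :=
  rao_blackwell_stmt8_general P Θ₀ 𝓕 𝓢 hle E hEproc G hG τ hτ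
end
end

section
/- In the Bernoulli setting with E = exp(λX₁ − ψ(λ)) and G := e^{−ψ(λ)}(1 + (e^λ−1)S/n), n ≥ 2, for any strictly concave function f on (0,∞) and any p ∈ (0,1): E_p[f(G)] > E_p[f(E)]. In particular, strict improvement holds because P_p(0 < S < n) = 1 − pⁿ − (1−p)ⁿ > 0 and given S = k with 1 ≤ k ≤ n−1, X₁ is nondegenerate. -/
/-!
With `a = e^{-ψ}` and `b = e^{λ-ψ}`, both `E` and `G` have the form `a + T (b - a)`, for
`T = X₁` and `T = S / n` respectively, and both choices of `T` have mean `p`. Since `X₁ ∈ {0,1}`,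
`f(E)` lies on the chord of `f` over `[a, b]`, so `E_p[f(E)] = f(a) + p (f(b) - f(a))`. By
concavity `f(G)` lies above that chord, strictly wherever `0 < S < n`, an event of positive
probability as soon as `n ≥ 2`.
-/
open MeasureTheory ENNReal Filter Set
open scoped Classical
noncomputable section

/-- The law of `n` i.i.d. Bernoulli(p) observations, as a measure on `Fin n → Bool`
(for `p ∈ [0,1]`; the parameter is truncated to `[0,1]` so the definition is total). -/
def bernoulliPi (n : ℕ) (p : ℝ) : Measure (Fin n → Bool) :=
  Measure.pi fun _ => (PMF.bernoulli (min (Real.toNNReal p) 1) (min_le_right _ _)).toMeasure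

/-- The first observation `X₁ ∈ {0,1}`. -/
def bernX1 (n : ℕ) (hn : 0 < n) (ω : Fin n → Bool) : ℝ := if ω ⟨0, hn⟩ then 1 else 0

/-- The sufficient statistic `S = ∑ᵢ Xᵢ`. -/
def bernS (n : ℕ) (ω : Fin n → Bool) : ℝ := ∑ i : Fin n, if ω i then 1 else 0

theorem ConcaveOn.add_mul_sub_le {s : Set ℝ} {f : ℝ → ℝ} (hf : ConcaveOn ℝ s f) {a b t : ℝ}
    (ha : a ∈ s) (hb : b ∈ s) (ht₀ : 0 ≤ t) (ht₁ : t ≤ 1) :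
    f a + t * (f b - f a) ≤ f (a + t * (b - a)) := by
  have h := hf.2 ha hb (sub_nonneg.2 ht₁) ht₀ (sub_add_cancel 1 t)
  simp only [smul_eq_mul] at h
  calc f a + t * (f b - f a) = (1 - t) * f a + t * f b := by ring
    _ ≤ f ((1 - t) * a + t * b) := h
    _ = f (a + t * (b - a)) := by ring_nf

theorem StrictConcaveOn.add_mul_sub_lt {s : Set ℝ} {f : ℝ → ℝ} (hf : StrictConcaveOn ℝ s f)
    {a b t : ℝ} (ha : a ∈ s) (hb : b ∈ s) (hab : a ≠ b) (ht₀ : 0 < t) (ht₁ : t < 1) :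
    f a + t * (f b - f a) < f (a + t * (b - a)) := by
  have h := hf.2 ha hb hab (sub_pos.2 ht₁) ht₀ (sub_add_cancel 1 t)
  simp only [smul_eq_mul] at h
  calc f a + t * (f b - f a) = (1 - t) * f a + t * f b := by ring
    _ < f ((1 - t) * a + t * b) := h
    _ = f (a + t * (b - a)) := by ring_nf

theorem MeasureTheory.integral_const_add_mul_const {Ω : Type*} [MeasurableSpace Ω]
    {μ : Measure Ω} [IsProbabilityMeasure μ] {T : Ω → ℝ} (hT : Integrable T μ) (c d : ℝ) :
    ∫ ω, c + T ω * d ∂μ = c + (∫ ω, T ω ∂μ) * d := by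
  rw [integral_add (integrable_const c) (hT.mul_const d), integral_const, integral_mul_const,
    probReal_univ, one_smul]

theorem MeasureTheory.integral_lt_integral_of_le_of_lt_of_measure_singleton_ne_zero
    {Ω : Type*} [MeasurableSpace Ω] [Finite Ω] [MeasurableSingletonClass Ω]
    {μ : Measure Ω} [IsFiniteMeasure μ] {g h : Ω → ℝ} (hle : g ≤ h) {ω₀ : Ω}
    (hlt : g ω₀ < h ω₀) (hμ : μ {ω₀} ≠ 0) :
    ∫ ω, g ω ∂μ < ∫ ω, h ω ∂μ := by
  rw [← sub_pos, ← integral_sub .of_finite .of_finite,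
    integral_pos_iff_support_of_nonneg (fun ω ↦ sub_nonneg.2 (hle ω)) .of_finite]
  refine pos_iff_ne_zero.2 fun h0 ↦ hμ (measure_mono_null ?_ h0)
  simpa [Function.mem_support, sub_eq_zero] using hlt.ne'

theorem PMF.toReal_bernoulli_toNNReal_apply {p : ℝ} (hp₀ : 0 ≤ p) (hp₁ : p ≤ 1) (b : Bool) :
    (PMF.bernoulli (min p.toNNReal 1) (min_le_right _ _) b).toReal = if b then p else 1 - p := by
  cases b <;> simp [PMF.bernoulli, PMF.ofFintype_apply, Real.toNNReal_le_one.2 hp₁, hp₀]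

instance (n : ℕ) (p : ℝ) : IsProbabilityMeasure (bernoulliPi n p) := by
  unfold bernoulliPi; infer_instance

section bernoulliPi

variable {n : ℕ} {p : ℝ}

theorem integral_bernoulliPi_coord (hp₀ : 0 ≤ p) (hp₁ : p ≤ 1) (i : Fin n) :
    ∫ ω, (if ω i then (1 : ℝ) else 0) ∂bernoulliPi n p = p := by
  refine (integral_comp_eval (X := fun _ ↦ Bool) (i := i)
    (f := fun b ↦ if b then (1 : ℝ) else 0) (by fun_prop)).trans ?_
  rw [PMF.integral_eq_sum, Fintype.sum_bool]
  simp [PMF.toReal_bernoulli_toNNReal_apply hp₀ hp₁]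

theorem integral_bernX1 (hn : 0 < n) (hp₀ : 0 ≤ p) (hp₁ : p ≤ 1) :
    ∫ ω, bernX1 n hn ω ∂bernoulliPi n p = p :=
  integral_bernoulliPi_coord hp₀ hp₁ _

theorem integral_bernS_div (hn : 0 < n) (hp₀ : 0 ≤ p) (hp₁ : p ≤ 1) :
    ∫ ω, bernS n ω / n ∂bernoulliPi n p = p := by
  simp only [bernS, integral_div, integral_finsetSum _ fun i _ ↦ Integrable.of_finite,
    integral_bernoulliPi_coord hp₀ hp₁, Finset.sum_const, Finset.card_univ, Fintype.card_fin,
    nsmul_eq_mul]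
  field_simp

theorem bernoulliPi_singleton_ne_zero (hp₀ : 0 < p) (hp₁ : p < 1) (ω : Fin n → Bool) :
    bernoulliPi n p {ω} ≠ 0 := by
  rw [bernoulliPi, ← Set.univ_pi_singleton, Measure.pi_pi, Finset.prod_ne_zero_iff]
  intro i _
  rw [PMF.toMeasure_apply_singleton _ _ (measurableSet_singleton _)]
  refine fun h ↦ (ne_of_gt ?_) (congrArg ENNReal.toReal h)
  rw [PMF.toReal_bernoulli_toNNReal_apply hp₀.le hp₁.le]
  split_ifs <;> simp [hp₀, hp₁]

theorem bernS_nonneg (ω : Fin n → Bool) : 0 ≤ bernS n ω :=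
  Finset.sum_nonneg fun i _ ↦ by split_ifs <;> norm_num

theorem bernS_le (ω : Fin n → Bool) : bernS n ω ≤ n :=
  (Finset.sum_le_card_nsmul _ _ 1 fun i _ ↦ by split_ifs <;> norm_num).trans (by simp)

theorem bernS_decide_eq_one (i₀ : Fin n) : bernS n (fun i ↦ decide (i = i₀)) = 1 := by
  simp [bernS]

end bernoulliPi

theorem rao_blackwell_stmt12_general
    (n : ℕ) (hn2 : 2 ≤ n) (hn : 0 < n)
    (lam : ℝ) (hlam : 0 < lam)
    (ψ : ℝ)
    (Efun : (Fin n → Bool) → ℝ)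
    (hEfun : ∀ ω, Efun ω = Real.exp (lam * bernX1 n hn ω - ψ))
    (Gfun : (Fin n → Bool) → ℝ)
    (hGfun : ∀ ω, Gfun ω = Real.exp (-ψ) * (1 + (Real.exp lam - 1) * bernS n ω / n))
    (f : ℝ → ℝ) (hf : StrictConcaveOn ℝ (Set.Ioi 0) f)
    (p : ℝ) (hp : 0 < p) (hp' : p < 1) :
    (∫ ω, f (Efun ω) ∂(bernoulliPi n p)) < ∫ ω, f (Gfun ω) ∂(bernoulliPi n p) := by
  set a := Real.exp (-ψ)
  set b := Real.exp (lam - ψ)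
  have hab : a ≠ b := (Real.exp_lt_exp.2 (by linarith)).ne
  have hba : b = Real.exp lam * a := by rw [← Real.exp_add, ← sub_eq_add_neg]
  have hnR : (0 : ℝ) < n := by exact_mod_cast hn
  have hE : ∀ ω, f (Efun ω) = f a + bernX1 n hn ω * (f b - f a) := fun ω ↦ by
    rw [hEfun, bernX1]; split_ifs <;> simp [a, b, sub_eq_neg_add]
  have hG : ∀ ω, Gfun ω = a + bernS n ω / n * (b - a) := fun ω ↦ by
    rw [hGfun, hba]; ring
  have hchord : ∀ ω, f a + bernS n ω / n * (f b - f a) ≤ f (Gfun ω) := fun ω ↦ by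
    rw [hG]
    exact hf.concaveOn.add_mul_sub_le (Real.exp_pos _) (Real.exp_pos _)
      (div_nonneg (bernS_nonneg ω) hnR.le) ((div_le_one hnR).2 (bernS_le ω))
  set ω₀ : Fin n → Bool := fun i ↦ decide (i = ⟨0, hn⟩)
  have hstrict : f a + bernS n ω₀ / n * (f b - f a) < f (Gfun ω₀) := by
    rw [hG, bernS_decide_eq_one]
    exact hf.add_mul_sub_lt (Real.exp_pos _) (Real.exp_pos _) hab (by positivity)
      ((div_lt_one hnR).2 (by exact_mod_cast hn2))
  calc ∫ ω, f (Efun ω) ∂bernoulliPi n p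
      = f a + p * (f b - f a) := by
        simp only [hE, integral_const_add_mul_const .of_finite, integral_bernX1 hn hp.le hp'.le]
    _ = ∫ ω, f a + bernS n ω / n * (f b - f a) ∂bernoulliPi n p := by
        rw [integral_const_add_mul_const .of_finite, integral_bernS_div hn hp.le hp'.le]
    _ < ∫ ω, f (Gfun ω) ∂bernoulliPi n p :=
        integral_lt_integral_of_le_of_lt_of_measure_singleton_ne_zero hchord hstrict
          (bernoulliPi_singleton_ne_zero hp hp' ω₀)

/-- In the Bernoulli setting with `E = exp(λ X₁ − ψ(λ))` and
`G = e^{−ψ(λ)}(1 + (e^λ − 1) S/n)`, `n ≥ 2`, for any strictly concave `f` on `(0,∞)`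
and any `p ∈ (0,1)`: `E_p[f(G)] > E_p[f(E)]`. -/
theorem rao_blackwell_stmt12
    (n : ℕ) (hn2 : 2 ≤ n) (hn : 0 < n) (p₀ : ℝ) (hp₀ : 0 < p₀) (hp₀' : p₀ < 1)
    (lam : ℝ) (hlam : 0 < lam)
    (ψ : ℝ) (hψ : ψ = Real.log (p₀ * Real.exp lam + 1 - p₀))
    (Efun : (Fin n → Bool) → ℝ)
    (hEfun : ∀ ω, Efun ω = Real.exp (lam * bernX1 n hn ω - ψ))
    (Gfun : (Fin n → Bool) → ℝ)
    (hGfun : ∀ ω, Gfun ω = Real.exp (-ψ) * (1 + (Real.exp lam - 1) * bernS n ω / n))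
    (f : ℝ → ℝ) (hf : StrictConcaveOn ℝ (Set.Ioi 0) f)
    (p : ℝ) (hp : 0 < p) (hp' : p < 1) :
    (∫ ω, f (Efun ω) ∂(bernoulliPi n p)) < ∫ ω, f (Gfun ω) ∂(bernoulliPi n p) :=
  rao_blackwell_stmt12_general n hn2 hn lam hlam ψ Efun hEfun Gfun hGfun f hf p hp hp'
end
end
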